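/- arXiv:2503.10405 — 14 statements merged into one kernel-verified Lean document; each statement's English description precedes it below -/
import Mathlib

section
/- Let T ⊂ ℝ^d be a d-dimensional simplex and let p ∈ ℝ^d be a nonzero vector. Then there exist two faces F₁ and F₂ of T with F₁ ∩ F₂ = ∅ and points x ∈ F₁, y ∈ F₂ such that y − x = γ·p for some real γ > 0 (i.e. y − x is parallel to p). -/
/-!
STATEMENT 0: Let `T ⊂ ℝ^d` be a `d`-dimensional simplex (the convex hull of `d+1`
affinely independent points `v 0, …, v d`) and let `p ∈ ℝ^d` be a nonzero vector.
Then there exist two faces `F₁`, `F₂` of `T` (convex hulls of subsets of the vertex set)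
with `F₁ ∩ F₂ = ∅` and points `x ∈ F₁`, `y ∈ F₂` such that `y − x = γ • p` for some
real `γ > 0`.
-/

theorem simplex_disjoint_faces_parallel
    {d : ℕ} (v : Fin (d + 1) → EuclideanSpace ℝ (Fin d))
    (hv : AffineIndependent ℝ v)
    (p : EuclideanSpace ℝ (Fin d)) (hp : p ≠ 0) :
    ∃ I J : Finset (Fin (d + 1)),
      convexHull ℝ (v '' ↑I) ∩ convexHull ℝ (v '' ↑J) = ∅ ∧
      ∃ x ∈ convexHull ℝ (v '' ↑I), ∃ y ∈ convexHull ℝ (v '' ↑J),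
        ∃ γ : ℝ, 0 < γ ∧ y - x = γ • p := by
  classical
  have hinj : Function.Injective v := hv.injective
  have htop : affineSpan ℝ (Set.range v) = ⊤ := by
    rw [hv.affineSpan_eq_top_iff_card_eq_finrank_add_one]
    simp [finrank_euclideanSpace]
  obtain ⟨w, hw, hwp⟩ := eq_affineCombination_of_mem_affineSpan_of_fintype
    (k := ℝ) (p := v) (p1 := p) (htop ▸ AffineSubspace.mem_top ℝ _ p)
  obtain ⟨u, hu, hu0⟩ := eq_affineCombination_of_mem_affineSpan_of_fintype
    (k := ℝ) (p := v) (p1 := (0 : EuclideanSpace ℝ (Fin d)))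
    (htop ▸ AffineSubspace.mem_top ℝ _ 0)
  set c : Fin (d + 1) → ℝ := w - u with hcdef
  have hcsum : ∑ i, c i = 0 := by
    simp [hcdef, Finset.sum_sub_distrib, hw, hu]
  have hpc : ∑ i, c i • v i = p := by
    have h1 := Finset.univ.affineCombination_vsub (k := ℝ) w u v
    rw [← hwp, ← hu0, Finset.weightedVSub_eq_linear_combination _ hcsum] at h1
    simpa [vsub_eq_sub] using h1.symm
  set I : Finset (Fin (d + 1)) := Finset.univ.filter (fun i => c i < 0) with hIdef
  set J : Finset (Fin (d + 1)) := Finset.univ.filter (fun i => 0 < c i) with hJdef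
  have hcne : c ≠ 0 := by
    intro h
    apply hp
    rw [← hpc, h]
    simp
  have hJne : ∃ i, 0 < c i := by
    by_contra h
    push_neg at h
    have : ∀ i ∈ Finset.univ, c i = 0 :=
      (Finset.sum_eq_zero_iff_of_nonpos (fun i _ => h i)).1 hcsum
    exact hcne (funext fun i => this i (Finset.mem_univ i))
  obtain ⟨i₀, hi₀⟩ := hJne
  have hJmem : i₀ ∈ J := by simp [hJdef, hi₀]
  set S : ℝ := ∑ i ∈ J, c i with hSdef
  have hSpos : 0 < S :=
    Finset.sum_pos (fun i hi => (Finset.mem_filter.1 hi).2) ⟨i₀, hJmem⟩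
  -- splitting sums over univ into I and J parts
  have hIJdisj : Disjoint I J := by
    rw [Finset.disjoint_left]
    intro a haI haJ
    have h1 := (Finset.mem_filter.1 haI).2
    have h2 := (Finset.mem_filter.1 haJ).2
    linarith
  have hsplit : ∀ f : Fin (d + 1) → EuclideanSpace ℝ (Fin d),
      (∑ i ∈ I, c i • f i) + (∑ i ∈ J, c i • f i) = ∑ i, c i • f i := by
    intro f
    rw [← Finset.sum_union hIJdisj]
    refine Finset.sum_subset (Finset.subset_univ _) ?_
    intro i _ hi
    have h0 : c i = 0 := by
      simp only [hIdef, hJdef, Finset.mem_union, Finset.mem_filter,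
        Finset.mem_univ, true_and, not_or, not_lt] at hi
      linarith [hi.1, hi.2]
    simp [h0]
  have hsplitc : (∑ i ∈ I, c i) + (∑ i ∈ J, c i) = 0 := by
    rw [← Finset.sum_union hIJdisj, ← hcsum]
    refine Finset.sum_subset (Finset.subset_univ _) ?_
    intro i _ hi
    simp only [hIdef, hJdef, Finset.mem_union, Finset.mem_filter,
      Finset.mem_univ, true_and, not_or, not_lt] at hi
    linarith [hi.1, hi.2]
  have hSI : ∑ i ∈ I, (-c i) = S := by
    rw [Finset.sum_neg_distrib]
    linarith [hsplitc]
  refine ⟨I, J, ?_, ?_⟩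
  · -- disjointness of the two faces
    have hsetI : (↑(I.image v) : Set (EuclideanSpace ℝ (Fin d))) = v '' ↑I := by
      simp [Finset.coe_image]
    have hsetJ : (↑(J.image v) : Set (EuclideanSpace ℝ (Fin d))) = v '' ↑J := by
      simp [Finset.coe_image]
    set SF : Finset (EuclideanSpace ℝ (Fin d)) := Finset.univ.image v with hSF
    have hs : AffineIndependent ℝ ((↑) : SF → EuclideanSpace ℝ (Fin d)) := by
      have he : (SF : Set (EuclideanSpace ℝ (Fin d))) = Set.range v := by simp [hSF]
      have h2 := hv.range
      rw [← he] at h2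
      exact h2
    have hmain := hs.convexHull_inter (t₁ := I.image v) (t₂ := J.image v)
      (Finset.image_subset_image (Finset.subset_univ I))
      (Finset.image_subset_image (Finset.subset_univ J))
    have hIJ : I.image v ∩ J.image v = ∅ := by
      rw [← Finset.image_inter _ _ hinj, Finset.disjoint_iff_inter_eq_empty.1 hIJdisj]
      simp
    rw [← Finset.coe_inter, hIJ] at hmain
    simp only [Finset.coe_empty, convexHull_empty] at hmain
    rw [← hsetI, ← hsetJ, ← hmain]
  · -- the two points
    refine ⟨I.centerMass (fun i => -c i) v, ?_, J.centerMass c v, ?_, S⁻¹, by positivity, ?_⟩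
    · refine Finset.centerMass_mem_convexHull I (fun i hi => ?_) (by rw [hSI]; exact hSpos)
        (fun i hi => ⟨i, hi, rfl⟩)
      have := (Finset.mem_filter.1 hi).2
      linarith
    · refine Finset.centerMass_mem_convexHull J (fun i hi => ?_) hSpos
        (fun i hi => ⟨i, hi, rfl⟩)
      have := (Finset.mem_filter.1 hi).2
      linarith
    · rw [Finset.centerMass, Finset.centerMass, hSI, ← hSdef]
      rw [← smul_sub]
      congr 1
      have : ∑ i ∈ I, (-c i) • v i = -∑ i ∈ I, c i • v i := by
        simp [neg_smul, Finset.sum_neg_distrib]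
      rw [this, sub_neg_eq_add, add_comm, hsplit, hpc]
end

section
/- Let f : Ω → ℝ be Lipschitz continuous with constant L, let 𝒯 be a simplicial partition of Ω ⊂ ℝ^d, and let f̂ be the piecewise-linear interpolation of f on 𝒯. Then for every simplex T ∈ 𝒯, ‖∇f̂_T‖ ≤ L · ℓ^max_T / δ^min_T, where ℓ^max_T is the length of the longest edge of T and δ^min_T is the shortest Euclidean distance between two disjoint faces of T. -/
open scoped RealInnerProductSpace

noncomputable section

/-- A simplicial partition of a set `Ω ⊆ ℝ^d`: a finite family of `d`-dimensional
simplices (each given by `d+1` affinely independent vertices) whose union is `Ω`,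
any two of which intersect in a common face (the convex hull of a subset of the
vertex set of each). -/
structure SimplicialPartition (d : ℕ) (Ω : Set (EuclideanSpace ℝ (Fin d))) where
  ι : Type
  fin : Fintype ι
  verts : ι → Fin (d + 1) → EuclideanSpace ℝ (Fin d)
  indep : ∀ i, AffineIndependent ℝ (verts i)
  covers : (⋃ i, convexHull ℝ (Set.range (verts i))) = Ω
  common_face : ∀ i j, ∃ I J : Finset (Fin (d + 1)),
      convexHull ℝ (Set.range (verts i)) ∩ convexHull ℝ (Set.range (verts j))
        = convexHull ℝ (verts i '' ↑I) ∧
      convexHull ℝ (Set.range (verts i)) ∩ convexHull ℝ (Set.range (verts j))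
        = convexHull ℝ (verts j '' ↑J)

/-!
STATEMENT 1: Let `f : Ω → ℝ` be Lipschitz continuous with constant `L`, `𝒯` a
simplicial partition of the bounded domain `Ω ⊆ ℝ^d`, and `f̂` the piecewise-linear
interpolation of `f` on `𝒯` (it agrees with `f` at every vertex and is affine on
every simplex).  Then for every simplex `T ∈ 𝒯`, writing `f̂_T x = ⟪g, x⟫ + b` on `T`,
we have `‖g‖ = ‖∇f̂_T‖ ≤ L * ℓmax / δmin`, where `ℓmax` is the length of the longest
edge of `T` (formalized as: any upper bound on the pairwise vertex distances) and
`δmin` the shortest distance between two disjoint faces of `T` (formalized as: any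
positive lower bound on the distances between faces spanned by disjoint vertex sets).
-/

theorem gradient_bound_of_lipschitz
    {d : ℕ} {Ω : Set (EuclideanSpace ℝ (Fin d))}
    (hΩbd : Bornology.IsBounded Ω)
    (P : SimplicialPartition d Ω)
    (f fhat : EuclideanSpace ℝ (Fin d) → ℝ) (L : ℝ) (hL : 0 ≤ L)
    (hf : ∀ x ∈ Ω, ∀ y ∈ Ω, |f x - f y| ≤ L * dist x y)
    (hinterp : ∀ i k, fhat (P.verts i k) = f (P.verts i k))
    (haff : ∀ i, ∃ (g : EuclideanSpace ℝ (Fin d)) (b : ℝ),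
        ∀ x ∈ convexHull ℝ (Set.range (P.verts i)), fhat x = ⟪g, x⟫ + b)
    (i : P.ι) (g : EuclideanSpace ℝ (Fin d)) (b : ℝ)
    (hg : ∀ x ∈ convexHull ℝ (Set.range (P.verts i)), fhat x = ⟪g, x⟫ + b)
    (ℓmax δmin : ℝ) (hδpos : 0 < δmin)
    (hℓ : ∀ k l, dist (P.verts i k) (P.verts i l) ≤ ℓmax)
    (hδ : ∀ I J : Finset (Fin (d + 1)), I.Nonempty → J.Nonempty → Disjoint I J →
        ∀ x ∈ convexHull ℝ (P.verts i '' ↑I), ∀ y ∈ convexHull ℝ (P.verts i '' ↑J),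
          δmin ≤ dist x y) :
    ‖g‖ ≤ L * ℓmax / δmin := by
  classical
  set v := P.verts i with hv
  have hℓ0 : 0 ≤ ℓmax := le_trans dist_nonneg (hℓ 0 0)
  have hΩv : ∀ k, v k ∈ Ω := by
    intro k
    rw [← P.covers]
    exact Set.mem_iUnion.2 ⟨i, subset_convexHull ℝ _ (Set.mem_range_self k)⟩
  rcases eq_or_ne g 0 with hg0 | hg0
  · rw [hg0]; simp; positivity
  -- write g as a combination with weights summing to 0
  have hspan : vectorSpan ℝ (Set.range v) = ⊤ := by
    have := (P.indep i).affineSpan_eq_top_iff_card_eq_finrank_add_one.mpr ?_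
    · rw [← direction_affineSpan, this, AffineSubspace.direction_top]
    · simp [finrank_euclideanSpace_fin]
  have hmem : g ∈ vectorSpan ℝ (Set.range v) := hspan ▸ Submodule.mem_top
  obtain ⟨s₀, w, hw0, hgw⟩ := (mem_vectorSpan_iff_eq_weightedVSub ℝ).1 hmem
  set c : Fin (d+1) → ℝ := fun k => if k ∈ s₀ then w k else 0 with hc
  have hcsum : ∑ k, c k = 0 := by
    simp only [hc, Finset.sum_ite_mem, Finset.univ_inter]; exact hw0
  have hgc : g = ∑ k, c k • v k := by
    rw [hgw, Finset.weightedVSub_eq_linear_combination _ hw0]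
    simp only [hc, ite_smul, zero_smul, Finset.sum_ite_mem, Finset.univ_inter]
  set I : Finset (Fin (d+1)) := Finset.univ.filter (fun k => 0 < c k) with hI
  set J : Finset (Fin (d+1)) := Finset.univ.filter (fun k => c k < 0) with hJ
  have hdisj : Disjoint I J := by
    simp only [hI, hJ, Finset.disjoint_filter]
    intro k _ hk; exact fun h => absurd h (not_lt.2 hk.le)
  have hczero : ∀ k, k ∉ I → k ∉ J → c k = 0 := by
    intro k hkI hkJ
    simp only [hI, hJ, Finset.mem_filter, Finset.mem_univ, true_and, not_lt] at hkI hkJ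
    exact le_antisymm hkI hkJ
  have hIJsum : ∀ (F : Fin (d+1) → EuclideanSpace ℝ (Fin d)),
      (∑ k ∈ I, c k • F k) + (∑ k ∈ J, c k • F k) = ∑ k, c k • F k := by
    intro F
    rw [← Finset.sum_union hdisj]
    refine Finset.sum_subset (Finset.subset_univ _) ?_
    intro k _ hk
    rw [Finset.mem_union, not_or] at hk
    rw [hczero k hk.1 hk.2, zero_smul]
  have hIJsum' : (∑ k ∈ I, c k) + (∑ k ∈ J, c k) = 0 := by
    rw [← hcsum, ← Finset.sum_union hdisj]
    refine Finset.sum_subset (Finset.subset_univ _) ?_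
    intro k _ hk
    rw [Finset.mem_union, not_or] at hk
    exact hczero k hk.1 hk.2
  have hIne : I.Nonempty := by
    by_contra h
    rw [Finset.not_nonempty_iff_eq_empty] at h
    have hall : ∀ k, c k = 0 := by
      intro k
      rcases lt_trichotomy (c k) 0 with hk | hk | hk
      · exfalso
        have hJle : ∑ k ∈ J, c k < 0 := by
          refine Finset.sum_neg (fun l hl => ?_) ⟨k, by simp [hJ, hk]⟩
          simp only [hJ, Finset.mem_filter] at hl; exact hl.2
        have : ∑ k ∈ I, c k = 0 := by simp [h]
        linarith [hIJsum']
      · exact hk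
      · exact absurd (by simp [hI, hk] : k ∈ I) (by simp [h])
    exact hg0 (by simp [hgc, hall])
  have hs : 0 < ∑ k ∈ I, c k := by
    refine Finset.sum_pos (fun k hk => ?_) hIne
    simp only [hI, Finset.mem_filter] at hk; exact hk.2
  have hJne : J.Nonempty := by
    by_contra h
    rw [Finset.not_nonempty_iff_eq_empty] at h
    have : ∑ k ∈ J, c k = 0 := by simp [h]
    linarith [hIJsum']
  set s : ℝ := ∑ k ∈ I, c k with hsdef
  have hJs : ∑ k ∈ J, (-c k) = s := by
    rw [Finset.sum_neg_distrib]; linarith [hIJsum']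
  -- the two points
  set x : EuclideanSpace ℝ (Fin d) := I.centerMass c v with hx
  set y : EuclideanSpace ℝ (Fin d) := J.centerMass (fun k => -c k) v with hy
  have hxmem : x ∈ convexHull ℝ (v '' ↑I) := by
    refine Finset.centerMass_mem_convexHull _ (fun k hk => ?_) hs
      (fun k hk => Set.mem_image_of_mem v hk)
    simp only [hI, Finset.mem_filter] at hk; exact hk.2.le
  have hymem : y ∈ convexHull ℝ (v '' ↑J) := by
    refine Finset.centerMass_mem_convexHull _ (fun k hk => ?_) (hJs ▸ hs)
      (fun k hk => Set.mem_image_of_mem v hk)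
    simp only [hJ, Finset.mem_filter] at hk; linarith [hk.2]
  have hsub : ∀ (K : Finset (Fin (d+1))), convexHull ℝ (v '' ↑K) ⊆ convexHull ℝ (Set.range v) :=
    fun K => convexHull_mono (Set.image_subset_range v ↑K)
  -- x - y = s⁻¹ • g
  have hxy : x - y = s⁻¹ • g := by
    rw [hx, hy, Finset.centerMass, Finset.centerMass, ← hsdef, hJs]
    rw [← smul_sub, hgc, ← hIJsum v]
    congr 1
    simp only [neg_smul, Finset.sum_neg_distrib, sub_neg_eq_add]
  have hdist : dist x y = s⁻¹ * ‖g‖ := by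
    rw [dist_eq_norm, hxy, norm_smul, Real.norm_eq_abs, abs_of_pos (by positivity)]
  have hδxy : δmin ≤ s⁻¹ * ‖g‖ := hdist ▸ hδ I J hIne hJne hdisj x hxmem y hymem
  -- inner product computation
  have hinner : ⟪g, x - y⟫ = s⁻¹ * ‖g‖ ^ 2 := by
    rw [hxy, real_inner_smul_right, real_inner_self_eq_norm_sq]
  -- fhat values at x and y as convex combinations of f at vertices
  have hval : ∀ (K : Finset (Fin (d+1))) (u : Fin (d+1) → ℝ), (∑ k ∈ K, u k) = s →
      ⟪g, K.centerMass u v⟫ + b = ∑ k ∈ K, (u k / s) * f (v k) := by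
    intro K u hu
    rw [Finset.centerMass, hu, inner_smul_right, inner_sum]
    have : ∀ k ∈ K, ⟪g, c k • v k⟫ = c k * ⟪g, v k⟫ := by
      intro k _; rw [real_inner_smul_right]
    simp only [real_inner_smul_right]
    have hfv : ∀ k, ⟪g, v k⟫ = f (v k) - b := by
      intro k
      have := hg (v k) (subset_convexHull ℝ _ (Set.mem_range_self k))
      rw [hinterp i k] at this
      linarith
    calc s⁻¹ * ∑ k ∈ K, u k * ⟪g, v k⟫ + b
        = s⁻¹ * ∑ k ∈ K, u k * (f (v k) - b) + b := by
          congr 2; exact Finset.sum_congr rfl (fun k _ => by rw [hfv])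
      _ = ∑ k ∈ K, (u k / s) * f (v k) := by
          have hssne : s ≠ 0 := ne_of_gt hs
          have hrhs : ∑ k ∈ K, (u k / s) * f (v k) = s⁻¹ * ∑ k ∈ K, u k * f (v k) := by
            rw [Finset.mul_sum]; exact Finset.sum_congr rfl (fun k _ => by ring)
          have h2 : ∑ k ∈ K, u k * (f (v k) - b) = (∑ k ∈ K, u k * f (v k)) - s * b := by
            rw [← hu, Finset.sum_mul, ← Finset.sum_sub_distrib]
            exact Finset.sum_congr rfl (fun k _ => by ring)
          rw [hrhs, h2, mul_sub, ← mul_assoc, inv_mul_cancel₀ hssne, one_mul]; ring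
  have hvx : ⟪g, x⟫ + b = ∑ k ∈ I, (c k / s) * f (v k) := hval I c rfl
  have hvy : ⟪g, y⟫ + b = ∑ k ∈ J, ((-c k) / s) * f (v k) := hval J (fun k => -c k) hJs
  -- bound the difference by double sum
  have hwI : ∑ k ∈ I, c k / s = 1 := by
    rw [← Finset.sum_div, ← hsdef, div_self (ne_of_gt hs)]
  have hwJ : ∑ k ∈ J, (-c k) / s = 1 := by
    rw [← Finset.sum_div, hJs, div_self (ne_of_gt hs)]
  have hdiff : ⟪g, x - y⟫ ≤ L * ℓmax := by
    have h1 : ⟪g, x - y⟫ = (∑ k ∈ I, (c k / s) * f (v k)) - ∑ k ∈ J, ((-c k) / s) * f (v k) := by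
      rw [inner_sub_right]; linarith [hvx, hvy]
    have h2 : (∑ k ∈ I, (c k / s) * f (v k)) - ∑ k ∈ J, ((-c k) / s) * f (v k)
        = ∑ k ∈ I, ∑ l ∈ J, (c k / s) * ((-c l) / s) * (f (v k) - f (v l)) := by
      have e1 : ∑ k ∈ I, (c k / s) * f (v k)
          = ∑ k ∈ I, ∑ l ∈ J, (c k / s) * ((-c l) / s) * f (v k) := by
        refine Finset.sum_congr rfl (fun k _ => ?_)
        have : ∑ l ∈ J, (c k / s) * ((-c l) / s) * f (v k)
            = ((c k / s) * f (v k)) * ∑ l ∈ J, (-c l) / s := by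
          rw [Finset.mul_sum]; exact Finset.sum_congr rfl (fun l _ => by ring)
        rw [this, hwJ, mul_one]
      have e2 : ∑ l ∈ J, ((-c l) / s) * f (v l)
          = ∑ k ∈ I, ∑ l ∈ J, (c k / s) * ((-c l) / s) * f (v l) := by
        rw [Finset.sum_comm]
        refine Finset.sum_congr rfl (fun l _ => ?_)
        rw [← Finset.sum_mul]
        have : ∑ k ∈ I, (c k / s) * ((-c l) / s) = (-c l) / s := by
          rw [← Finset.sum_mul, hwI, one_mul]
        rw [this]
      rw [e1, e2, ← Finset.sum_sub_distrib]
      refine Finset.sum_congr rfl (fun k _ => ?_)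
      rw [← Finset.sum_sub_distrib]
      exact Finset.sum_congr rfl (fun l _ => by ring)
    rw [h1, h2]
    calc ∑ k ∈ I, ∑ l ∈ J, (c k / s) * ((-c l) / s) * (f (v k) - f (v l))
        ≤ ∑ k ∈ I, ∑ l ∈ J, (c k / s) * ((-c l) / s) * (L * ℓmax) := by
          refine Finset.sum_le_sum (fun k hk => Finset.sum_le_sum (fun l hl => ?_))
          simp only [hI, hJ, Finset.mem_filter] at hk hl
          have hcoef : 0 ≤ (c k / s) * ((-c l) / s) := by
            apply mul_nonneg <;> [skip; skip] <;>
              apply div_nonneg <;> first | linarith [hk.2] | linarith [hl.2] | exact hs.le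
          refine mul_le_mul_of_nonneg_left ?_ hcoef
          calc f (v k) - f (v l) ≤ |f (v k) - f (v l)| := le_abs_self _
            _ ≤ L * dist (v k) (v l) := hf _ (hΩv k) _ (hΩv l)
            _ ≤ L * ℓmax := mul_le_mul_of_nonneg_left (hℓ k l) hL
      _ = L * ℓmax := by
          have hrow : ∀ k ∈ I, ∑ l ∈ J, (c k / s) * ((-c l) / s) * (L * ℓmax)
              = (c k / s) * (L * ℓmax) := by
            intro k _
            have : ∑ l ∈ J, (c k / s) * ((-c l) / s) * (L * ℓmax)
                = ((c k / s) * (L * ℓmax)) * ∑ l ∈ J, (-c l) / s := by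
              rw [Finset.mul_sum]; exact Finset.sum_congr rfl (fun l _ => by ring)
            rw [this, hwJ, mul_one]
          rw [Finset.sum_congr rfl hrow, ← Finset.sum_mul, hwI, one_mul]
  -- conclude
  have hkey : s⁻¹ * ‖g‖ ^ 2 ≤ L * ℓmax := hinner ▸ hdiff
  have hgpos : 0 < ‖g‖ := norm_pos_iff.2 hg0
  rw [le_div_iff₀ hδpos]
  nlinarith [mul_le_mul_of_nonneg_left hδxy hgpos.le, hkey]
end
end

section
/- Let f : Ω → ℝ be Lipschitz continuous with constant L, Ω ⊂ ℝ^d a bounded convex domain, 𝒯 a simplicial partition of Ω, and f̂ the piecewise-linear interpolation of f on 𝒯. Then f̂ is Lipschitz continuous on Ω with Lipschitz constant at most L · max_{T ∈ 𝒯} ℓ^max_T / δ^min_T, where ℓ^max_T is the length of the longest edge of T and δ^min_T is the shortest Euclidean distance between two disjoint faces of T. -/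
open scoped RealInnerProductSpace

noncomputable section

/-!
STATEMENT 2: Let `f : Ω → ℝ` be Lipschitz with constant `L` on a bounded convex
domain `Ω ⊆ ℝ^d`, `𝒯` a simplicial partition of `Ω`, and `f̂` the piecewise-linear
interpolation of `f` on `𝒯` (agreeing with `f` at all vertices, affine with gradient
`g i` on the `i`-th simplex).  If for each simplex `ℓ i` bounds the pairwise vertex
distances (longest edge) from above and `δ i > 0` bounds the distance between any two
disjoint faces from below, and `c` is an upper bound of `L * ℓ i / δ i` over all
simplices (so `c ≥ L · max_T ℓ^max_T / δ^min_T` when instantiated with the exact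
values), then `f̂` is Lipschitz continuous on `Ω` with constant `c`.
-/


lemma abs_sub_le_of_cover {ι : Type} [Fintype ι] (φ : ℝ → ℝ) (a b : ι → ℝ) (K : ℝ)
    (hcov : ∀ t ∈ Set.Icc (0:ℝ) 1, ∃ i, t ∈ Set.Icc (a i) (b i))
    (hlip : ∀ i, ∀ s ∈ Set.Icc (a i) (b i), ∀ t ∈ Set.Icc (a i) (b i),
      |φ s - φ t| ≤ K * |s - t|) :
    |φ 1 - φ 0| ≤ K := by
  classical
  set A := {t : ℝ | t ∈ Set.Icc (0:ℝ) 1 ∧ |φ t - φ 0| ≤ K * t} with hA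
  have h0A : (0:ℝ) ∈ A := ⟨⟨le_refl 0, zero_le_one⟩, by simp⟩
  have hAne : A.Nonempty := ⟨0, h0A⟩
  have hbdd : BddAbove A := ⟨1, fun t ht => ht.1.2⟩
  set T := sSup A with hT
  have hT0 : 0 ≤ T := le_csSup hbdd h0A
  have hT1 : T ≤ 1 := csSup_le hAne (fun t ht => ht.1.2)
  have hTA : |φ T - φ 0| ≤ K * T := by
    rcases eq_or_lt_of_le hT0 with h | h
    · rw [← h]; simp
    · obtain ⟨i, hai, hbi⟩ : ∃ i, a i < T ∧ T ≤ b i := by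
        set S' := Finset.univ.filter (fun i => a i < T) with hS'
        have hS'ne : S'.Nonempty := by
          obtain ⟨i, hi⟩ := hcov (T/2) ⟨by linarith, by linarith⟩
          exact ⟨i, Finset.mem_filter.mpr ⟨Finset.mem_univ _,
            lt_of_le_of_lt hi.1 (by linarith)⟩⟩
        by_contra hcon
        push_neg at hcon
        set β := S'.sup' hS'ne b with hβdef
        have hβ : β < T := by
          obtain ⟨i, hiS, hie⟩ := Finset.exists_mem_eq_sup' hS'ne b
          rw [hβdef, hie]
          exact hcon i (Finset.mem_filter.mp hiS).2
        set t := max ((β + T)/2) (T/2) with htdef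
        have htT : t < T := max_lt (by linarith) (by linarith)
        have ht0 : 0 ≤ t := le_trans (by linarith) (le_max_right _ _)
        obtain ⟨j, hj⟩ := hcov t ⟨ht0, by linarith⟩
        have hjS : j ∈ S' := Finset.mem_filter.mpr ⟨Finset.mem_univ _,
          lt_of_le_of_lt hj.1 htT⟩
        have h1 : b j ≤ β := Finset.le_sup' b hjS
        have h2 : (β + T)/2 ≤ t := le_max_left _ _
        have h3 := hj.2
        linarith
      obtain ⟨s, hsA, hs⟩ := exists_lt_of_lt_csSup hAne hai
      have hsT : s ≤ T := le_csSup hbdd hsA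
      have h1 := hlip i s ⟨le_of_lt hs, le_trans hsT hbi⟩ T ⟨le_of_lt hai, hbi⟩
      rw [abs_of_nonpos (by linarith : s - T ≤ 0)] at h1
      have h2 : |φ T - φ 0| ≤ |φ T - φ s| + |φ s - φ 0| := abs_sub_le _ _ _
      rw [abs_sub_comm (φ T) (φ s)] at h2
      have h3 := hsA.2
      nlinarith [h1, h2, h3]
  have hTeq : T = 1 := by
    by_contra hne
    have hTlt : T < 1 := lt_of_le_of_ne hT1 hne
    obtain ⟨i, hai, hbi⟩ : ∃ i, a i ≤ T ∧ T < b i := by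
      set S'' := Finset.univ.filter (fun i => T < b i) with hS''
      have hS''ne : S''.Nonempty := by
        obtain ⟨i, hi⟩ := hcov ((T + 1)/2) ⟨by linarith, by linarith⟩
        exact ⟨i, Finset.mem_filter.mpr ⟨Finset.mem_univ _,
          lt_of_lt_of_le (by linarith) hi.2⟩⟩
      by_contra hcon
      push_neg at hcon
      set α := S''.inf' hS''ne a with hαdef
      have hα : T < α := by
        obtain ⟨i, hiS, hie⟩ := Finset.exists_mem_eq_inf' hS''ne a
        rw [hαdef, hie]
        by_contra h'
        push_neg at h'
        exact absurd (Finset.mem_filter.mp hiS).2 (not_lt_of_ge (hcon i h'))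
      set t := min ((T + α)/2) ((T + 1)/2) with htdef
      have htT : T < t := lt_min (by linarith) (by linarith)
      obtain ⟨j, hj⟩ := hcov t ⟨by linarith, le_trans (min_le_right _ _) (by linarith)⟩
      have hjS : j ∈ S'' := Finset.mem_filter.mpr ⟨Finset.mem_univ _,
        lt_of_lt_of_le htT hj.2⟩
      have h1 : α ≤ a j := Finset.inf'_le a hjS
      have h2 : t ≤ (T + α)/2 := min_le_left _ _
      have h3 := hj.1
      linarith
    set t1 := min (b i) 1 with ht1def
    have ht1T : T < t1 := lt_min hbi hTlt
    have h1 := hlip i t1 ⟨le_trans hai (le_of_lt ht1T), min_le_left _ _⟩ T ⟨hai, le_of_lt hbi⟩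
    rw [abs_of_nonneg (by linarith : (0:ℝ) ≤ t1 - T)] at h1
    have ht1A : t1 ∈ A := by
      refine ⟨⟨le_trans hT0 (le_of_lt ht1T), min_le_right _ _⟩, ?_⟩
      have h2 : |φ t1 - φ 0| ≤ |φ t1 - φ T| + |φ T - φ 0| := abs_sub_le _ _ _
      nlinarith [h1, h2, hTA]
    have : t1 ≤ T := le_csSup hbdd ht1A
    linarith
  rw [hTeq] at hTA
  simpa using hTA


lemma gradient_bound {d : ℕ} (v : Fin (d + 1) → EuclideanSpace ℝ (Fin d))
    (hindep : AffineIndependent ℝ v) (g : EuclideanSpace ℝ (Fin d))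
    (M : ℝ) (hM : ∀ k l, ⟪g, v k⟫ - ⟪g, v l⟫ ≤ M) (δ : ℝ) (hδpos : 0 < δ)
    (hδ : ∀ I J : Finset (Fin (d + 1)), I.Nonempty → J.Nonempty → Disjoint I J →
        ∀ x ∈ convexHull ℝ (v '' ↑I), ∀ y ∈ convexHull ℝ (v '' ↑J), δ ≤ dist x y) :
    ‖g‖ * δ ≤ M := by
  classical
  by_cases hg : g = 0
  · rw [hg]
    simpa using le_trans (le_of_eq (sub_self _).symm) (hM 0 0)
  -- express g as combination with zero coefficient sum
  have hspan : affineSpan ℝ (Set.range v) = ⊤ := by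
    rw [AffineIndependent.affineSpan_eq_top_iff_card_eq_finrank_add_one hindep]
    simp
  have hvs : vectorSpan ℝ (Set.range v) = ⊤ := by
    rw [← direction_affineSpan, hspan, AffineSubspace.direction_top]
  have hmem : g ∈ Submodule.span ℝ (Set.range fun k => v k - v 0) := by
    have h1 : Submodule.span ℝ (Set.range fun k => v k - v 0) = ⊤ := by
      have := vectorSpan_range_eq_span_range_vsub_right ℝ v 0
      simp only [vsub_eq_sub] at this
      rw [← this, hvs]
    rw [h1]; exact Submodule.mem_top
  obtain ⟨cf, hcf⟩ := (Submodule.mem_span_range_iff_exists_fun ℝ).mp hmem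
  set μ : Fin (d + 1) → ℝ := fun k => cf k - if k = 0 then ∑ j, cf j else 0 with hμdef
  have hμsum : ∑ k, μ k = 0 := by
    simp [hμdef, Finset.sum_sub_distrib]
  have hμrep : ∑ k, μ k • v k = g := by
    rw [← hcf]
    rw [Finset.sum_congr rfl (fun k _ => sub_smul (cf k) _ (v k))]
    rw [Finset.sum_sub_distrib]
    have h2 : ∑ k, (if k = 0 then ∑ j, cf j else 0) • v k = (∑ j, cf j) • v 0 := by
      rw [Finset.sum_congr rfl (fun k _ => show (if k = 0 then ∑ j, cf j else 0) • v k
        = if k = 0 then (∑ j, cf j) • v 0 else 0 by split <;> simp_all)]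
      simp
    rw [h2, Finset.sum_smul]
    rw [Finset.sum_congr rfl (fun k _ => smul_sub (cf k) (v k) (v 0))]
    rw [Finset.sum_sub_distrib]
  have hexne : ∃ k, μ k ≠ 0 := by
    by_contra hcon
    push_neg at hcon
    apply hg
    rw [← hμrep]
    simp [hcon]
  have hpos : ∃ k, 0 < μ k := by
    by_contra hcon
    push_neg at hcon
    obtain ⟨k0, hk0⟩ := hexne
    have : ∑ k, μ k < ∑ _k : Fin (d+1), (0:ℝ) :=
      Finset.sum_lt_sum (fun k _ => hcon k) ⟨k0, Finset.mem_univ _, lt_of_le_of_ne (hcon k0) hk0⟩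
    simp [hμsum] at this
  have hneg : ∃ k, μ k < 0 := by
    by_contra hcon
    push_neg at hcon
    obtain ⟨k0, hk0⟩ := hexne
    have : ∑ _k : Fin (d+1), (0:ℝ) < ∑ k, μ k :=
      Finset.sum_lt_sum (fun k _ => hcon k) ⟨k0, Finset.mem_univ _, lt_of_le_of_ne (hcon k0) (Ne.symm hk0)⟩
    simp [hμsum] at this
  set I : Finset (Fin (d + 1)) := Finset.univ.filter (fun k => 0 < μ k) with hIdef
  set J : Finset (Fin (d + 1)) := Finset.univ.filter (fun k => ¬ 0 < μ k) with hJdef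
  have hIne : I.Nonempty := by
    obtain ⟨k, hk⟩ := hpos
    exact ⟨k, Finset.mem_filter.mpr ⟨Finset.mem_univ _, hk⟩⟩
  have hJne : J.Nonempty := by
    obtain ⟨k, hk⟩ := hneg
    exact ⟨k, Finset.mem_filter.mpr ⟨Finset.mem_univ _, not_lt_of_ge (le_of_lt hk)⟩⟩
  have hdisj : Disjoint I J := by
    rw [Finset.disjoint_left]
    intro k hk hk'
    exact (Finset.mem_filter.mp hk').2 (Finset.mem_filter.mp hk).2
  set σ := ∑ k ∈ I, μ k with hσdef
  have hσpos : 0 < σ := Finset.sum_pos (fun k hk => (Finset.mem_filter.mp hk).2) hIne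
  have hsplit : ∑ k ∈ I, μ k • v k + ∑ k ∈ J, μ k • v k = g := by
    rw [hIdef, hJdef, Finset.sum_filter_add_sum_filter_not, hμrep]
  have hJsum : ∑ k ∈ J, (-μ k) = σ := by
    have h1 : ∑ k ∈ I, μ k + ∑ k ∈ J, μ k = 0 := by
      rw [hIdef, hJdef, Finset.sum_filter_add_sum_filter_not, hμsum]
    rw [Finset.sum_neg_distrib]
    linarith
  set x' := I.centerMass μ v with hx'def
  set y' := J.centerMass (fun k => -μ k) v with hy'def
  have hx'mem : x' ∈ convexHull ℝ (v '' ↑I) :=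
    Finset.centerMass_mem_convexHull I (fun k hk => le_of_lt (Finset.mem_filter.mp hk).2)
      (hσdef ▸ hσpos) (fun k hk => Set.mem_image_of_mem v hk)
  have hy'mem : y' ∈ convexHull ℝ (v '' ↑J) :=
    Finset.centerMass_mem_convexHull J
      (fun k hk => neg_nonneg.mpr (le_of_not_gt (Finset.mem_filter.mp hk).2))
      (hJsum ▸ hσpos) (fun k hk => Set.mem_image_of_mem v hk)
  have hxy : x' - y' = σ⁻¹ • g := by
    rw [hx'def, hy'def, Finset.centerMass, Finset.centerMass, hJsum, ← hσdef]
    have h1 : ∑ k ∈ J, (-μ k) • v k = -∑ k ∈ J, μ k • v k := by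
      simp [neg_smul]
    rw [h1, smul_neg, sub_neg_eq_add, ← smul_add, hsplit]
  have hdist : δ ≤ ‖x' - y'‖ := by
    have := hδ I J hIne hJne hdisj x' hx'mem y' hy'mem
    rwa [dist_eq_norm] at this
  have hnorm : ‖x' - y'‖ = σ⁻¹ * ‖g‖ := by
    rw [hxy, norm_smul, Real.norm_eq_abs, abs_of_pos (inv_pos.mpr hσpos)]
  have hinner : ⟪g, x' - y'⟫ = σ⁻¹ * ‖g‖ ^ 2 := by
    rw [hxy, real_inner_smul_right, real_inner_self_eq_norm_sq]
  -- max and min vertices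
  obtain ⟨kM, _, hkM⟩ := Finset.exists_max_image Finset.univ (fun k => ⟪g, v k⟫)
    Finset.univ_nonempty
  obtain ⟨km, _, hkm⟩ := Finset.exists_min_image Finset.univ (fun k => ⟪g, v k⟫)
    Finset.univ_nonempty
  have hlin : IsLinearMap ℝ (fun z : EuclideanSpace ℝ (Fin d) => ⟪g, z⟫) :=
    ⟨fun a b' => inner_add_right g a b', fun r a => real_inner_smul_right g a r⟩
  have hxmax : ⟪g, x'⟫ ≤ ⟪g, v kM⟫ := by
    have hsub : convexHull ℝ (v '' ↑I) ⊆ {z | ⟪g, z⟫ ≤ ⟪g, v kM⟫} :=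
      convexHull_min (by rintro _ ⟨k, _, rfl⟩; exact hkM k (Finset.mem_univ k))
        (convex_halfSpace_le hlin _)
    exact hsub hx'mem
  have hymin : ⟪g, v km⟫ ≤ ⟪g, y'⟫ := by
    have hsub : convexHull ℝ (v '' ↑J) ⊆ {z | ⟪g, v km⟫ ≤ ⟪g, z⟫} :=
      convexHull_min (by rintro _ ⟨k, _, rfl⟩; exact hkm k (Finset.mem_univ k))
        (convex_halfSpace_ge hlin _)
    exact hsub hy'mem
  have hkey : σ⁻¹ * ‖g‖ ^ 2 ≤ M := by
    rw [← hinner, inner_sub_right]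
    have := hM kM km
    linarith
  have hgpos : 0 < ‖g‖ := norm_pos_iff.mpr hg
  calc ‖g‖ * δ ≤ ‖g‖ * (σ⁻¹ * ‖g‖) := by
        apply mul_le_mul_of_nonneg_left _ (le_of_lt hgpos)
        rw [← hnorm]; exact hdist
    _ = σ⁻¹ * ‖g‖ ^ 2 := by ring
    _ ≤ M := hkey

theorem pwl_interpolation_lipschitz
    {d : ℕ} {Ω : Set (EuclideanSpace ℝ (Fin d))}
    (hΩbd : Bornology.IsBounded Ω) (hΩconv : Convex ℝ Ω)
    (P : SimplicialPartition d Ω)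
    (f fhat : EuclideanSpace ℝ (Fin d) → ℝ) (L : ℝ) (hL : 0 ≤ L)
    (hf : ∀ x ∈ Ω, ∀ y ∈ Ω, |f x - f y| ≤ L * dist x y)
    (hinterp : ∀ i k, fhat (P.verts i k) = f (P.verts i k))
    (g : P.ι → EuclideanSpace ℝ (Fin d)) (b : P.ι → ℝ)
    (haff : ∀ i, ∀ x ∈ convexHull ℝ (Set.range (P.verts i)), fhat x = ⟪g i, x⟫ + b i)
    (ℓ δ : P.ι → ℝ) (hδpos : ∀ i, 0 < δ i)
    (hℓ : ∀ i k l, dist (P.verts i k) (P.verts i l) ≤ ℓ i)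
    (hδ : ∀ i, ∀ I J : Finset (Fin (d + 1)), I.Nonempty → J.Nonempty → Disjoint I J →
        ∀ x ∈ convexHull ℝ (P.verts i '' ↑I), ∀ y ∈ convexHull ℝ (P.verts i '' ↑J),
          δ i ≤ dist x y)
    (c : ℝ) (hc : ∀ i, L * ℓ i / δ i ≤ c) :
    ∀ x ∈ Ω, ∀ y ∈ Ω, |fhat x - fhat y| ≤ c * dist x y := by
  classical
  haveI := P.fin
  have vertexΩ : ∀ i k, P.verts i k ∈ Ω := fun i k => by
    have h : P.verts i k ∈ ⋃ j, convexHull ℝ (Set.range (P.verts j)) :=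
      Set.mem_iUnion.mpr ⟨i, subset_convexHull ℝ _ (Set.mem_range_self k)⟩
    rw [P.covers] at h
    exact h
  have hℓ0 : ∀ i, 0 ≤ ℓ i := fun i => by
    have := hℓ i 0 0
    simpa [dist_self] using this
  -- Part A: gradient norms bounded by c
  have hgle : ∀ i, ‖g i‖ ≤ c := by
    intro i
    have hM : ∀ k l, ⟪g i, P.verts i k⟫ - ⟪g i, P.verts i l⟫ ≤ L * ℓ i := by
      intro k l
      have hvk : ∀ m, ⟪g i, P.verts i m⟫ = f (P.verts i m) - b i := by
        intro m
        have h1 := haff i (P.verts i m) (subset_convexHull ℝ _ (Set.mem_range_self m))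
        rw [hinterp] at h1
        linarith
      rw [hvk, hvk]
      have h1 := hf (P.verts i k) (vertexΩ i k) (P.verts i l) (vertexΩ i l)
      have h2 := hℓ i k l
      have h3 : L * dist (P.verts i k) (P.verts i l) ≤ L * ℓ i :=
        mul_le_mul_of_nonneg_left h2 hL
      have h4 : f (P.verts i k) - f (P.verts i l)
          ≤ |f (P.verts i k) - f (P.verts i l)| := le_abs_self _
      linarith
    have hgb := gradient_bound (P.verts i) (P.indep i) (g i) (L * ℓ i) hM (δ i)
      (hδpos i) (hδ i)
    have := hc i
    rw [div_le_iff₀ (hδpos i)] at this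
    calc ‖g i‖ = ‖g i‖ * δ i / δ i := by
          rw [mul_div_assoc, div_self (ne_of_gt (hδpos i)), mul_one]
      _ ≤ L * ℓ i / δ i := by
          gcongr
          exact (hδpos i).le
      _ ≤ c := hc i
  -- Part B
  intro x hx y hy
  obtain ⟨si0, hsi0⟩ : ∃ i, x ∈ convexHull ℝ (Set.range (P.verts i)) := by
    have hx' := hx
    rw [← P.covers] at hx'
    exact Set.mem_iUnion.mp hx'
  have hc0 : 0 ≤ c :=
    le_trans (div_nonneg (mul_nonneg hL (hℓ0 si0)) (le_of_lt (hδpos si0))) (hc si0)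
  set γ : ℝ → EuclideanSpace ℝ (Fin d) := fun t => x + t • (y - x) with hγdef
  have hγaff : ∀ (a' b' t1 t2 : ℝ), a' + b' = 1 →
      γ (a' * t1 + b' * t2) = a' • γ t1 + b' • γ t2 := by
    intro a' b' t1 t2 hab
    have hb'eq : b' = 1 - a' := by linarith
    subst hb'eq
    simp only [hγdef]
    module
  have hγΩ : ∀ t ∈ Set.Icc (0:ℝ) 1, γ t ∈ Ω := by
    intro t ht
    have h1 := hΩconv hx hy (by linarith [ht.1, ht.2] : (0:ℝ) ≤ 1 - t) ht.1 (by ring)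
    have h2 : γ t = (1 - t) • x + t • y := by
      simp only [hγdef]
      module
    rw [h2]; exact h1
  set S : P.ι → Set ℝ :=
    fun i => γ ⁻¹' (convexHull ℝ (Set.range (P.verts i))) ∩ Set.Icc 0 1 with hSdef
  have hSconv : ∀ i, Convex ℝ (S i) := by
    intro i t1 ht1 t2 ht2 a' b' ha hb hab
    constructor
    · rw [Set.mem_preimage]
      have heq : γ (a' • t1 + b' • t2) = a' • γ t1 + b' • γ t2 := by
        simpa [smul_eq_mul] using hγaff a' b' t1 t2 hab
      rw [heq]
      exact (convex_convexHull ℝ _) ht1.1 ht2.1 ha hb hab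
    · exact (convex_Icc (0:ℝ) 1) ht1.2 ht2.2 ha hb hab
  have hScomp : ∀ i, IsCompact (S i) := by
    intro i
    apply IsCompact.of_isClosed_subset isCompact_Icc
    · apply IsClosed.inter _ isClosed_Icc
      apply IsClosed.preimage
      · exact (continuous_const.add (continuous_id.smul continuous_const))
      · exact (Set.Finite.isCompact_convexHull (𝕜 := ℝ) (Set.finite_range _)).isClosed
    · exact Set.inter_subset_right
  set a : P.ι → ℝ := fun i => if h : (S i).Nonempty then sInf (S i) else 1 with hadef
  set b' : P.ι → ℝ := fun i => if h : (S i).Nonempty then sSup (S i) else 0 with hb'def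
  have hIcc : ∀ i, (S i).Nonempty → S i = Set.Icc (a i) (b' i) := by
    intro i hne
    simp only [hadef, hb'def, dif_pos hne]
    exact eq_Icc_of_connected_compact ⟨hne, (hSconv i).isPreconnected⟩ (hScomp i)
  have hcov : ∀ t ∈ Set.Icc (0:ℝ) 1, ∃ i, t ∈ Set.Icc (a i) (b' i) := by
    intro t ht
    have h1 := hγΩ t ht
    rw [← P.covers] at h1
    obtain ⟨i, hi⟩ := Set.mem_iUnion.mp h1
    have htS : t ∈ S i := ⟨hi, ht⟩
    exact ⟨i, (hIcc i ⟨t, htS⟩) ▸ htS⟩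
  have hlip : ∀ i, ∀ s ∈ Set.Icc (a i) (b' i), ∀ t ∈ Set.Icc (a i) (b' i),
      |fhat (γ s) - fhat (γ t)| ≤ (c * dist x y) * |s - t| := by
    intro i s hs t ht
    by_cases hne : (S i).Nonempty
    · have hIcc' := hIcc i hne
      have hsS : s ∈ S i := hIcc' ▸ hs
      have htS : t ∈ S i := hIcc' ▸ ht
      rw [haff i _ hsS.1, haff i _ htS.1]
      have heq : ⟪g i, γ s⟫ + b i - (⟪g i, γ t⟫ + b i) = ⟪g i, γ s - γ t⟫ := by
        rw [inner_sub_right]; ring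
      rw [heq]
      have hseg : γ s - γ t = (s - t) • (y - x) := by
        simp only [hγdef]
        module
      calc |⟪g i, γ s - γ t⟫| ≤ ‖g i‖ * ‖γ s - γ t‖ := abs_real_inner_le_norm _ _
        _ = ‖g i‖ * (|s - t| * ‖y - x‖) := by
            rw [hseg, norm_smul, Real.norm_eq_abs]
        _ ≤ c * (|s - t| * ‖y - x‖) := by
            apply mul_le_mul_of_nonneg_right (hgle i)
            positivity
        _ = (c * dist x y) * |s - t| := by
            rw [dist_eq_norm, norm_sub_rev]; ring
    · exfalso
      simp only [hadef, hb'def, dif_neg hne] at hs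
      have := hs.1
      have := hs.2
      linarith [hs.1, hs.2]
  have hfinal := abs_sub_le_of_cover (fun t => fhat (γ t)) a b' (c * dist x y) hcov hlip
  have hγ0 : γ 0 = x := by simp [hγdef]
  have hγ1 : γ 1 = y := by simp [hγdef]
  simp only [hγ0, hγ1] at hfinal
  rw [abs_sub_comm] at hfinal
  exact hfinal
end
end

section
/- Let 𝒯 be a triangulation of Ω ⊂ ℝ² and f : Ω → ℝ Lipschitz continuous with constant L, and let f̂_T be the affine interpolant of f over a triangle T ∈ 𝒯 (agreeing with f at the three vertices of T). Then ‖∇f̂_T‖ ≤ L / sin(α^min_T), where α^min_T denotes the smallest interior angle of the triangle T. -/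
open scoped RealInnerProductSpace

noncomputable section

/-- Inner product on `ℝ²` in coordinates. -/
private lemma inner_two (x y : EuclideanSpace ℝ (Fin 2)) :
    ⟪x, y⟫ = x 0 * y 0 + x 1 * y 1 := by
  simp [PiLp.inner_apply, RCLike.inner_apply, Fin.sum_univ_two]; ring

/-- The 2D "Parseval" identity for the (scaled) orthonormal pair `g`, `rot g`. -/
private lemma key_identity (g x y : EuclideanSpace ℝ (Fin 2)) :
    ⟪g, x⟫ * ⟪g, y⟫ + (-(g 1) * x 0 + g 0 * x 1) * (-(g 1) * y 0 + g 0 * y 1)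
      = ‖g‖ ^ 2 * ⟪x, y⟫ := by
  have hg : ‖g‖ ^ 2 = g 0 * g 0 + g 1 * g 1 := by
    rw [← real_inner_self_eq_norm_sq, inner_two]
  rw [inner_two, inner_two, inner_two, hg]; ring

/-- Lower bound for the perpendicular component. -/
private lemma Q_lower {G N S Co P Q : ℝ} (hG : 0 < G) (hN : 0 < N) (hCo : 0 ≤ Co)
    (hSC : S ^ 2 + Co ^ 2 = 1) (hPQ : P * P + Q * Q = G ^ 2 * N ^ 2)
    (hP : |P| < G * S * N) : G * N * Co < |Q| := by
  have hsq : (G * N * Co) ^ 2 < |Q| ^ 2 := by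
    rw [sq_abs]
    have h1 : P ^ 2 < (G * S * N) ^ 2 := by
      rw [← sq_abs P]
      exact pow_lt_pow_left₀ hP (abs_nonneg _) two_ne_zero
    nlinarith
  exact lt_of_pow_lt_pow_left₀ 2 (abs_nonneg _) hsq

/-- The contradiction obtained from a pair of edges whose perpendicular
components (w.r.t. the gradient) have the same sign. -/
private lemma contra_pair {G Nj Nk m α Pj Pk Qj Qk : ℝ}
    (hG : 0 < G) (hNj : 0 < Nj) (hNk : 0 < Nk) (hm0 : 0 < m)
    (hα0 : 0 ≤ α) (hαle : α ≤ Real.pi - 2 * m)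
    (hPj : |Pj| < G * Real.sin m * Nj) (hPk : |Pk| < G * Real.sin m * Nk)
    (hQj : G * Nj * Real.cos m < |Qj|) (hQk : G * Nk * Real.cos m < |Qk|)
    (hQQ : 0 < Qj * Qk)
    (hid : Pj * Pk + Qj * Qk = G ^ 2 * (-(Real.cos α) * (Nj * Nk))) : False := by
  have hmle : 2 * m ≤ Real.pi := by linarith
  have hcosm : 0 ≤ Real.cos m := by
    apply Real.cos_nonneg_of_mem_Icc
    constructor <;> [linarith [Real.pi_pos]; linarith]
  have hcosα : Real.cos (Real.pi - 2 * m) ≤ Real.cos α :=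
    Real.cos_le_cos_of_nonneg_of_le_pi hα0 (by linarith) hαle
  rw [Real.cos_pi_sub] at hcosα
  -- Qj * Qk > (G Nj cos m)(G Nk cos m)
  have hQjQk : G * Nj * Real.cos m * (G * Nk * Real.cos m) < Qj * Qk := by
    have h1 : G * Nj * Real.cos m * (G * Nk * Real.cos m) < |Qj| * |Qk| :=
      mul_lt_mul'' hQj hQk (by positivity) (by positivity)
    rwa [← abs_mul, abs_of_pos hQQ] at h1
  -- Pj * Pk > -(G sin m Nj)(G sin m Nk)
  have hPjPk : -(G * Real.sin m * Nj * (G * Real.sin m * Nk)) < Pj * Pk := by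
    have h1 : |Pj * Pk| < G * Real.sin m * Nj * (G * Real.sin m * Nk) := by
      rw [abs_mul]
      exact mul_lt_mul'' hPj hPk (abs_nonneg _) (abs_nonneg _)
    have h2 := neg_abs_le (Pj * Pk)
    linarith
  nlinarith [Real.cos_two_mul m, Real.sin_sq_add_cos_sq m,
    mul_pos (mul_pos hG hG) (mul_pos hNj hNk),
    mul_nonneg (mul_nonneg hG.le hG.le) (mul_nonneg hNj.le hNk.le)]

open EuclideanGeometry in
/-- The key geometric estimate, for an abstract (nondegenerate) triangle. -/
private lemma tri_aux (A B C g : EuclideanSpace ℝ (Fin 2)) (L : ℝ) (hL : 0 ≤ L)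
    (hncol : ¬ Collinear ℝ ({A, B, C} : Set (EuclideanSpace ℝ (Fin 2))))
    (hAB : |⟪g, B - A⟫| ≤ L * ‖B - A‖)
    (hBC : |⟪g, C - B⟫| ≤ L * ‖C - B‖)
    (hCA : |⟪g, A - C⟫| ≤ L * ‖A - C‖) :
    ‖g‖ ≤ L / Real.sin (min (∠ B A C) (min (∠ A B C) (∠ A C B))) := by
  set m := min (∠ B A C) (min (∠ A B C) (∠ A C B)) with hmdef
  -- pairwise distinctness
  have hsub : ∀ s : Set (EuclideanSpace ℝ (Fin 2)),
      A ∈ s → B ∈ s → C ∈ s → ({A, B, C} : Set _) ⊆ s := by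
    rintro s h1 h2 h3 x hx
    rcases hx with rfl | rfl | rfl <;> assumption
  have hABne : A ≠ B := by
    rintro rfl
    exact hncol ((collinear_pair ℝ A C).subset (hsub _ (by simp) (by simp) (by simp)))
  have hBCne : B ≠ C := by
    rintro rfl
    exact hncol ((collinear_pair ℝ A B).subset (hsub _ (by simp) (by simp) (by simp)))
  have hACne : A ≠ C := by
    rintro rfl
    exact hncol ((collinear_pair ℝ A B).subset (hsub _ (by simp) (by simp) (by simp)))
  -- not collinear, in various orders
  have hncolBAC : ¬ Collinear ℝ ({B, A, C} : Set (EuclideanSpace ℝ (Fin 2))) :=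
    fun h => hncol (h.subset (by rintro x (rfl | rfl | rfl) <;> simp))
  have hncolABC : ¬ Collinear ℝ ({A, B, C} : Set (EuclideanSpace ℝ (Fin 2))) := hncol
  have hncolACB : ¬ Collinear ℝ ({A, C, B} : Set (EuclideanSpace ℝ (Fin 2))) :=
    fun h => hncol (h.subset (by rintro x (rfl | rfl | rfl) <;> simp))
  have hA0 : 0 < ∠ B A C := angle_pos_of_not_collinear hncolBAC
  have hB0 : 0 < ∠ A B C := angle_pos_of_not_collinear hncolABC
  have hC0 : 0 < ∠ A C B := angle_pos_of_not_collinear hncolACB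
  have hAπ : ∠ B A C < Real.pi := angle_lt_pi_of_not_collinear hncolBAC
  -- angle sum
  have hsum : ∠ A B C + ∠ A C B + ∠ B A C = Real.pi := by
    have h := EuclideanGeometry.angle_add_angle_add_angle_eq_pi (p₁ := A) (p₂ := B) C
      (Ne.symm hABne)
    rwa [angle_comm B C A, angle_comm C A B] at h
  have hmA : m ≤ ∠ B A C := min_le_left _ _
  have hmB : m ≤ ∠ A B C := le_trans (min_le_right _ _) (min_le_left _ _)
  have hmC : m ≤ ∠ A C B := le_trans (min_le_right _ _) (min_le_right _ _)
  have hm0 : 0 < m := lt_min hA0 (lt_min hB0 hC0)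
  have hmπ : m < Real.pi := lt_of_le_of_lt hmA hAπ
  have hsin : 0 < Real.sin m := Real.sin_pos_of_pos_of_lt_pi hm0 hmπ
  by_contra hcon
  push_neg at hcon
  have hLlt : L < ‖g‖ * Real.sin m := (div_lt_iff₀ hsin).mp hcon
  have hgpos : 0 < ‖g‖ := by
    rcases (norm_nonneg g).eq_or_lt with h | h
    · exfalso; rw [← h, zero_mul] at hLlt; linarith
    · exact h
  -- edges
  set e1 : EuclideanSpace ℝ (Fin 2) := B - A with he1
  set e2 : EuclideanSpace ℝ (Fin 2) := C - B with he2
  set e3 : EuclideanSpace ℝ (Fin 2) := A - C with he3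
  have hN1 : 0 < ‖e1‖ := by rw [he1]; exact norm_sub_pos_iff.mpr (Ne.symm hABne)
  have hN2 : 0 < ‖e2‖ := by rw [he2]; exact norm_sub_pos_iff.mpr (Ne.symm hBCne)
  have hN3 : 0 < ‖e3‖ := by rw [he3]; exact norm_sub_pos_iff.mpr hACne
  -- components of the edges along g and perpendicular to g
  set Q1 : ℝ := -(g 1) * e1 0 + g 0 * e1 1 with hQ1def
  set Q2 : ℝ := -(g 1) * e2 0 + g 0 * e2 1 with hQ2def
  set Q3 : ℝ := -(g 1) * e3 0 + g 0 * e3 1 with hQ3def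
  -- strict bounds on the parallel components
  have hP1 : |⟪g, e1⟫| < ‖g‖ * Real.sin m * ‖e1‖ :=
    lt_of_le_of_lt hAB (mul_lt_mul_of_pos_right hLlt hN1)
  have hP2 : |⟪g, e2⟫| < ‖g‖ * Real.sin m * ‖e2‖ :=
    lt_of_le_of_lt hBC (mul_lt_mul_of_pos_right hLlt hN2)
  have hP3 : |⟪g, e3⟫| < ‖g‖ * Real.sin m * ‖e3‖ :=
    lt_of_le_of_lt hCA (mul_lt_mul_of_pos_right hLlt hN3)
  have hm2 : 2 * m ≤ Real.pi := by linarith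
  have hcosm : 0 ≤ Real.cos m := by
    apply Real.cos_nonneg_of_mem_Icc
    constructor <;> [linarith [Real.pi_pos]; linarith]
  -- strict lower bounds on the perpendicular components
  have hQbound : ∀ (e : EuclideanSpace ℝ (Fin 2)), 0 < ‖e‖ →
      |⟪g, e⟫| < ‖g‖ * Real.sin m * ‖e‖ →
      ‖g‖ * ‖e‖ * Real.cos m < |(-(g 1) * e 0 + g 0 * e 1)| := by
    intro e hNe hPe
    have hkey := key_identity g e e
    rw [real_inner_self_eq_norm_sq] at hkey
    refine Q_lower hgpos hNe hcosm (Real.sin_sq_add_cos_sq m) ?_ hPe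
    exact hkey
  have hQ1b := hQbound e1 hN1 hP1
  have hQ2b := hQbound e2 hN2 hP2
  have hQ3b := hQbound e3 hN3 hP3
  -- the inner products of pairs of edges in terms of the triangle's angles
  have hangdef : ∀ x y z : EuclideanSpace ℝ (Fin 2),
      ∠ x y z = InnerProductGeometry.angle (x - y) (z - y) := fun _ _ _ => rfl
  have hip12 : ⟪e1, e2⟫ = -(Real.cos (∠ A B C)) * (‖e1‖ * ‖e2‖) := by
    have h := InnerProductGeometry.cos_angle_mul_norm_mul_norm (A - B) (C - B)
    rw [hangdef]
    have he : e1 = -(A - B) := by rw [he1, neg_sub]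
    rw [he, inner_neg_left, norm_neg, he2, ← h]
    ring
  have hip23 : ⟪e2, e3⟫ = -(Real.cos (∠ A C B)) * (‖e2‖ * ‖e3‖) := by
    have h := InnerProductGeometry.cos_angle_mul_norm_mul_norm (B - C) (A - C)
    rw [angle_comm, hangdef]
    have he : e2 = -(B - C) := by rw [he2, neg_sub]
    rw [he, inner_neg_left, norm_neg, he3, ← h]
    ring
  have hip13 : ⟪e1, e3⟫ = -(Real.cos (∠ B A C)) * (‖e1‖ * ‖e3‖) := by
    have h := InnerProductGeometry.cos_angle_mul_norm_mul_norm (B - A) (C - A)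
    rw [hangdef]
    have he : e3 = -(C - A) := by rw [he3, neg_sub]
    rw [he, inner_neg_right, norm_neg, he1, ← h]
    ring
  -- two of the perpendicular components have the same sign; apply `contra_pair`
  by_cases h12 : 0 < Q1 * Q2
  · exact contra_pair hgpos hN1 hN2 hm0 (angle_nonneg A B C) (by linarith)
      hP1 hP2 hQ1b hQ2b h12
      (by rw [key_identity g e1 e2, hip12])
  by_cases h23 : 0 < Q2 * Q3
  · exact contra_pair hgpos hN2 hN3 hm0 (angle_nonneg A C B) (by linarith)
      hP2 hP3 hQ2b hQ3b h23
      (by rw [key_identity g e2 e3, hip23])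
  by_cases h13 : 0 < Q1 * Q3
  · exact contra_pair hgpos hN1 hN3 hm0 (angle_nonneg B A C) (by linarith)
      hP1 hP3 hQ1b hQ3b h13
      (by rw [key_identity g e1 e3, hip13])
  · push_neg at h12 h23 h13
    have hq1 : 0 < Q1 ^ 2 := by
      have h := pow_pos (lt_of_le_of_lt (mul_nonneg (by positivity) hcosm) hQ1b) 2
      rwa [sq_abs] at h
    have hq2 : 0 < Q2 ^ 2 := by
      have h := pow_pos (lt_of_le_of_lt (mul_nonneg (by positivity) hcosm) hQ2b) 2
      rwa [sq_abs] at h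
    have hq3 : 0 < Q3 ^ 2 := by
      have h := pow_pos (lt_of_le_of_lt (mul_nonneg (by positivity) hcosm) hQ3b) 2
      rwa [sq_abs] at h
    have hpos : (0:ℝ) < Q1 ^ 2 * Q2 ^ 2 * Q3 ^ 2 := mul_pos (mul_pos hq1 hq2) hq3
    have hneg : 0 ≤ -(Q1 * Q2) * -(Q2 * Q3) * -(Q1 * Q3) :=
      mul_nonneg (mul_nonneg (neg_nonneg.2 h12) (neg_nonneg.2 h23)) (neg_nonneg.2 h13)
    have heq : -(Q1 * Q2) * -(Q2 * Q3) * -(Q1 * Q3) = -(Q1 ^ 2 * Q2 ^ 2 * Q3 ^ 2) := by ring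
    rw [heq] at hneg
    linarith

theorem gradient_bound_of_lipschitz_planar
    {Ω : Set (EuclideanSpace ℝ (Fin 2))}
    (hΩbd : Bornology.IsBounded Ω)
    (P : SimplicialPartition 2 Ω)
    (f : EuclideanSpace ℝ (Fin 2) → ℝ) (L : ℝ) (hL : 0 ≤ L)
    (hf : ∀ x ∈ Ω, ∀ y ∈ Ω, |f x - f y| ≤ L * dist x y)
    (i : P.ι) (g : EuclideanSpace ℝ (Fin 2)) (b : ℝ)
    (hg : ∀ k, ⟪g, P.verts i k⟫ + b = f (P.verts i k)) :
    ‖g‖ ≤ L / Real.sin (min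
        (EuclideanGeometry.angle (P.verts i 1) (P.verts i 0) (P.verts i 2))
        (min (EuclideanGeometry.angle (P.verts i 0) (P.verts i 1) (P.verts i 2))
          (EuclideanGeometry.angle (P.verts i 0) (P.verts i 2) (P.verts i 1)))) := by
  have hmem : ∀ k, P.verts i k ∈ Ω := fun k => by
    exact P.covers.subset (Set.mem_iUnion.2 ⟨i, subset_convexHull ℝ _ ⟨k, rfl⟩⟩)
  have hedge : ∀ j k : Fin 3, |⟪g, P.verts i j - P.verts i k⟫|
      ≤ L * ‖P.verts i j - P.verts i k‖ := by
    intro j k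
    have h1 : ⟪g, P.verts i j - P.verts i k⟫ = f (P.verts i j) - f (P.verts i k) := by
      rw [inner_sub_right]
      have hj := hg j; have hk := hg k
      linarith
    rw [h1]
    have h2 := hf _ (hmem j) _ (hmem k)
    rwa [dist_eq_norm] at h2
  have hncol : ¬ Collinear ℝ
      ({P.verts i 0, P.verts i 1, P.verts i 2} : Set (EuclideanSpace ℝ (Fin 2))) := by
    have h := affineIndependent_iff_not_collinear.mp (P.indep i)
    intro hc
    apply h
    refine hc.subset ?_
    rintro x ⟨k, rfl⟩
    fin_cases k <;> simp
  exact tri_aux _ _ _ g L hL hncol (hedge 1 0) (hedge 2 1) (hedge 0 2)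
end
end

section
/- Let 𝒯 be a triangulation of a bounded convex domain Ω ⊂ ℝ², f : Ω → ℝ Lipschitz continuous with constant L, and f̂ the piecewise-linear interpolation of f on 𝒯. If α is a lower bound on the smallest interior angle of every triangle in 𝒯 (with 0 < α), then f̂ is Lipschitz continuous on Ω with Lipschitz constant at most L / sin(α). -/
open scoped RealInnerProductSpace

noncomputable section

/-!
STATEMENT 4: Let `𝒯` be a triangulation of a bounded convex domain `Ω ⊂ ℝ²`,
`f : Ω → ℝ` Lipschitz with constant `L`, and `f̂` the piecewise-linear interpolation
of `f` on `𝒯` (agreeing with `f` at every vertex and affine on every triangle).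
If `α > 0` is a lower bound on the smallest interior angle of every triangle in `𝒯`,
then `f̂` is Lipschitz continuous on `Ω` with Lipschitz constant at most
`L / sin α`.
-/


/-- If `[s,t]` is covered by finitely many closed sets on each of which `h` is
`K`-Lipschitz, then `|h t - h s| ≤ K * (t - s)`. -/
lemma lip_of_closed_cover {ι : Type*} (K : ℝ) (h : ℝ → ℝ) (I : ι → Set ℝ)
    (hcl : ∀ k, IsClosed (I k))
    (hlip : ∀ k, ∀ u ∈ I k, ∀ v ∈ I k, |h u - h v| ≤ K * |u - v|) :
    ∀ (S : Finset ι) (s t : ℝ), s ≤ t → Set.Icc s t ⊆ ⋃ k ∈ S, I k →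
      |h t - h s| ≤ K * (t - s) := by
  classical
  intro S
  induction S using Finset.strongInduction with
  | _ S ih =>
    intro s t hst hcov
    have hsmem : s ∈ Set.Icc s t := ⟨le_rfl, hst⟩
    obtain ⟨k, hkS, hsk⟩ : ∃ k ∈ S, s ∈ I k := by
      simpa using hcov hsmem
    set A := I k ∩ Set.Icc s t with hA
    have hAne : A.Nonempty := ⟨s, hsk, hsmem⟩
    have hAcp : IsCompact A := isCompact_Icc.inter_left (hcl k)
    set b := sSup A with hbdef
    have hbA : b ∈ A := hAcp.sSup_mem hAne
    have hsb : s ≤ b := hbA.2.1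
    have hbt : b ≤ t := hbA.2.2
    have hstep1 : |h b - h s| ≤ K * (b - s) := by
      have := hlip k b hbA.1 s hsk
      rwa [abs_of_nonneg (sub_nonneg.2 hsb)] at this
    rcases eq_or_lt_of_le hbt with hb | hb
    · rw [hb] at hstep1; linarith [hstep1]
    · have hIoc : Set.Ioc b t ⊆ ⋃ k' ∈ S.erase k, I k' := by
        intro u hu
        obtain ⟨hu1, hu2⟩ := Set.mem_Ioc.1 hu
        have humem : u ∈ Set.Icc s t := Set.mem_Icc.2 ⟨hsb.trans hu1.le, hu2⟩
        obtain ⟨k', hk'S, huk'⟩ : ∃ k' ∈ S, u ∈ I k' := by simpa using hcov humem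
        have hne : k' ≠ k := by
          intro e; subst e
          exact absurd (le_csSup hAcp.bddAbove (Set.mem_inter huk' humem)) (not_le.2 hu1)
        simp only [Set.mem_iUnion]
        exact ⟨k', Finset.mem_erase.2 ⟨hne, hk'S⟩, huk'⟩
      have hcl' : IsClosed (⋃ k' ∈ S.erase k, I k') :=
        Set.Finite.isClosed_biUnion (S.erase k).finite_toSet (fun _ _ => hcl _)
      have hbmem : b ∈ ⋃ k' ∈ S.erase k, I k' := by
        have h1 : b ∈ closure (Set.Ioc b t) := by
          rw [closure_Ioc hb.ne]; exact ⟨le_rfl, hbt⟩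
        have h2 := closure_mono hIoc h1
        rwa [hcl'.closure_eq] at h2
      have hcov' : Set.Icc b t ⊆ ⋃ k' ∈ S.erase k, I k' := by
        intro u hu
        rcases eq_or_lt_of_le hu.1 with e | l
        · exact e ▸ hbmem
        · exact hIoc ⟨l, hu.2⟩
      have hstep2 := ih (S.erase k) (Finset.erase_ssubset hkS) b t hbt hcov'
      calc |h t - h s| ≤ |h t - h b| + |h b - h s| := abs_sub_le _ _ _
        _ ≤ K * (t - b) + K * (b - s) := add_le_add hstep2 hstep1
        _ = K * (t - s) := by ring


lemma real_cone (s L A B N i : ℝ) (hs : 0 < s) (hsle : s ≤ 1) (hL : 0 ≤ L)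
    (hA : 0 ≤ A) (hB : 0 ≤ B) (hN : 0 ≤ N)
    (h1 : N ^ 2 ≤ L * (A + B)) (h2 : N ^ 2 = A ^ 2 + B ^ 2 + 2 * i)
    (hi : (2 * s ^ 2 - 1) * (A * B) ≤ i) : N * s ≤ L := by
  have hs2 : s ^ 2 ≤ 1 := by nlinarith
  have h4 : s ^ 2 * (A + B) ^ 2 ≤ N ^ 2 := by
    nlinarith [sq_nonneg (A - B), mul_nonneg hA hB, hi, hs2]
  have h3 : s * (A + B) ≤ N := by
    nlinarith [sq_nonneg (N - s * (A + B)), sq_nonneg (N + s * (A + B)),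
      mul_nonneg (mul_nonneg hs.le (add_nonneg hA hB)) hN]
  rcases hN.eq_or_lt with h0 | h0
  · rw [← h0, zero_mul]; exact hL
  · nlinarith [mul_le_mul_of_nonneg_left h1 hs.le, mul_le_mul_of_nonneg_left h3 hL]

/-- Cone bound. -/
lemma cone_bound {E : Type*} [NormedAddCommGroup E] [InnerProductSpace ℝ E]
    {α L a b : ℝ} {u w g : E} (hs : 0 < Real.sin α) (hL : 0 ≤ L)
    (hg : g = a • u + b • w) (ha : 0 ≤ a) (hb : 0 ≤ b)
    (hu : |⟪g, u⟫| ≤ L * ‖u‖) (hw : |⟪g, w⟫| ≤ L * ‖w‖)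
    (huw : (2 * Real.sin α ^ 2 - 1) * (‖u‖ * ‖w‖) ≤ ⟪u, w⟫) :
    ‖g‖ ≤ L / Real.sin α := by
  rw [le_div_iff₀ hs]
  refine real_cone (Real.sin α) L (a * ‖u‖) (b * ‖w‖) ‖g‖ (a * b * ⟪u, w⟫) hs
    (Real.sin_le_one α) hL (by positivity) (by positivity) (norm_nonneg g) ?_ ?_ ?_
  · have e1 : (⟪g, g⟫ : ℝ) = a * ⟪g, u⟫ + b * ⟪g, w⟫ := by
      nth_rewrite 2 [hg]
      rw [inner_add_right, real_inner_smul_right, real_inner_smul_right]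
    have e2 : (⟪g, g⟫ : ℝ) = ‖g‖ ^ 2 := real_inner_self_eq_norm_sq g
    have hgu := (abs_le.1 hu).2
    have hgw := (abs_le.1 hw).2
    nlinarith [mul_le_mul_of_nonneg_left hgu ha, mul_le_mul_of_nonneg_left hgw hb]
  · rw [← real_inner_self_eq_norm_sq g, hg]
    rw [inner_add_left, inner_add_right, inner_add_right, real_inner_smul_left,
      real_inner_smul_left, real_inner_smul_left, real_inner_smul_right,
      real_inner_smul_right, real_inner_smul_right, real_inner_self_eq_norm_sq,
      real_inner_self_eq_norm_sq, real_inner_comm w u, norm_smul, Real.norm_eq_abs,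
      abs_of_nonneg hb, mul_pow]
    ring
  · have h := mul_le_mul_of_nonneg_left huw (mul_nonneg ha hb)
    nlinarith [h]

lemma triangle_grad_bound
    {α L : ℝ} (hL : 0 ≤ L) (hα : 0 < α)
    (v : Fin 3 → EuclideanSpace ℝ (Fin 2)) (hv : AffineIndependent ℝ v)
    (h0 : α ≤ EuclideanGeometry.angle (v 1) (v 0) (v 2))
    (h1 : α ≤ EuclideanGeometry.angle (v 0) (v 1) (v 2))
    (h2 : α ≤ EuclideanGeometry.angle (v 0) (v 2) (v 1))
    (g : EuclideanSpace ℝ (Fin 2))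
    (he : ∀ j k, |⟪g, v j - v k⟫| ≤ L * ‖v j - v k‖) :
    0 < Real.sin α ∧ ‖g‖ ≤ L / Real.sin α := by
  -- distinct vertices
  have h01 : v 0 ≠ v 1 := hv.injective.ne (by decide)
  have h21 : v 2 ≠ v 1 := hv.injective.ne (by decide)
  -- angle sum
  have hsum := EuclideanGeometry.angle_add_angle_add_angle_eq_pi (p₁ := v 1) (v 2) h01
  rw [EuclideanGeometry.angle_comm (v 2) (v 1) (v 0)] at hsum
  -- hsum : ∠ v1 v0 v2 + ∠ v0 v2 v1 + ∠ v0 v1 v2 = π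
  have hn0 := EuclideanGeometry.angle_nonneg (v 1) (v 0) (v 2)
  have hn1 := EuclideanGeometry.angle_nonneg (v 0) (v 1) (v 2)
  have hn2 := EuclideanGeometry.angle_nonneg (v 0) (v 2) (v 1)
  have hsin : 0 < Real.sin α := Real.sin_pos_of_pos_of_lt_pi hα (by linarith)
  refine ⟨hsin, ?_⟩
  have hcos : 2 * Real.sin α ^ 2 - 1 = Real.cos (Real.pi - 2 * α) := by
    rw [Real.cos_pi_sub, Real.cos_two_mul]
    linarith [Real.sin_sq_add_cos_sq α]
  have inner_bd : ∀ x y : EuclideanSpace ℝ (Fin 2),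
      InnerProductGeometry.angle x y ≤ Real.pi - 2 * α →
      (2 * Real.sin α ^ 2 - 1) * (‖x‖ * ‖y‖) ≤ ⟪x, y⟫ := by
    intro x y hxy
    have hc : Real.cos (Real.pi - 2 * α) ≤ Real.cos (InnerProductGeometry.angle x y) :=
      Real.cos_le_cos_of_nonneg_of_le_pi (InnerProductGeometry.angle_nonneg x y)
        (by linarith) hxy
    calc (2 * Real.sin α ^ 2 - 1) * (‖x‖ * ‖y‖)
        ≤ Real.cos (InnerProductGeometry.angle x y) * (‖x‖ * ‖y‖) := by
          rw [hcos]; exact mul_le_mul_of_nonneg_right hc (by positivity)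
      _ = ⟪x, y⟫ := InnerProductGeometry.cos_angle_mul_norm_mul_norm x y
  -- the three angle identities
  have a0 : InnerProductGeometry.angle (v 1 - v 0) (v 2 - v 0)
      = EuclideanGeometry.angle (v 1) (v 0) (v 2) := by
    rw [EuclideanGeometry.angle, vsub_eq_sub, vsub_eq_sub]
  have a1 : InnerProductGeometry.angle (v 1 - v 0) (v 1 - v 2)
      = EuclideanGeometry.angle (v 0) (v 1) (v 2) := by
    rw [EuclideanGeometry.angle, vsub_eq_sub, vsub_eq_sub, ← InnerProductGeometry.angle_neg_neg,
      neg_sub, neg_sub]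
  have a2 : InnerProductGeometry.angle (v 0 - v 2) (v 1 - v 2)
      = EuclideanGeometry.angle (v 0) (v 2) (v 1) := by
    rw [EuclideanGeometry.angle, vsub_eq_sub, vsub_eq_sub]
  have b0 := inner_bd (v 1 - v 0) (v 2 - v 0) (by rw [a0]; linarith)
  have b1 := inner_bd (v 1 - v 0) (v 1 - v 2) (by rw [a1]; linarith)
  have b2 := inner_bd (v 0 - v 2) (v 1 - v 2) (by rw [a2]; linarith)
  -- decomposition of g
  obtain ⟨a, b, hdec⟩ : ∃ a b : ℝ, g = a • (v 1 - v 0) + b • (v 2 - v 0) := by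
    have h := (affineIndependent_iff_linearIndependent_vsub ℝ v 0).1 hv
    have hli : LinearIndependent ℝ (fun i : Fin 2 => v (Fin.succ i) - v 0) := by
      have hinj : Function.Injective
          (fun i : Fin 2 => (⟨Fin.succ i, Fin.succ_ne_zero i⟩ : {x : Fin 3 // x ≠ 0})) := by
        intro i j hij
        simpa [Fin.succ_inj] using congrArg Subtype.val hij
      have := h.comp _ hinj
      exact this
    have hspan := hli.span_eq_top_of_card_eq_finrank (by simp)
    have hmem : g ∈ Submodule.span ℝ (Set.range fun i : Fin 2 => v (Fin.succ i) - v 0) := by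
      rw [hspan]; trivial
    obtain ⟨c, hc⟩ := (Submodule.mem_span_range_iff_exists_fun ℝ).1 hmem
    exact ⟨c 0, c 1, by rw [← hc, Fin.sum_univ_two]; rfl⟩
  have he' : ∀ j k, |⟪-g, v j - v k⟫| ≤ L * ‖v j - v k‖ := by
    intro j k; rw [inner_neg_left, abs_neg]; exact he j k
  rcases le_or_gt 0 a with ha | ha <;> rcases le_or_gt 0 b with hb | hb
  · -- a ≥ 0, b ≥ 0
    exact cone_bound hsin hL hdec ha hb (he 1 0) (he 2 0) b0
  · -- a ≥ 0, b < 0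
    rcases le_or_gt 0 (a + b) with hab | hab
    · refine cone_bound hsin hL (a := a + b) (b := -b) (u := v 1 - v 0) (w := v 1 - v 2)
        ?_ hab (by linarith) (he 1 0) (he 1 2) b1
      rw [hdec]; module
    · refine cone_bound hsin hL (a := -(a + b)) (b := a) (u := v 0 - v 2) (w := v 1 - v 2)
        ?_ (by linarith) ha (he 0 2) (he 1 2) b2
      rw [hdec]; module
  · -- a < 0, b ≥ 0 : use -g
    rcases le_or_gt 0 (a + b) with hab | hab
    · have := cone_bound hsin hL (g := -g) (a := a + b) (b := -a) (u := v 0 - v 2)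
        (w := v 1 - v 2) (by rw [hdec]; module) hab (by linarith) (he' 0 2) (he' 1 2) b2
      rwa [norm_neg] at this
    · have := cone_bound hsin hL (g := -g) (a := -(a + b)) (b := b) (u := v 1 - v 0)
        (w := v 1 - v 2) (by rw [hdec]; module) (by linarith) hb (he' 1 0) (he' 1 2) b1
      rwa [norm_neg] at this
  · -- a < 0, b < 0 : use -g
    have := cone_bound hsin hL (g := -g) (a := -a) (b := -b) (u := v 1 - v 0)
      (w := v 2 - v 0) (by rw [hdec]; module) (by linarith) (by linarith) (he' 1 0) (he' 2 0) b0
    rwa [norm_neg] at this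

theorem pwl_interpolation_lipschitz_planar
    {Ω : Set (EuclideanSpace ℝ (Fin 2))}
    (hΩbd : Bornology.IsBounded Ω) (hΩconv : Convex ℝ Ω)
    (P : SimplicialPartition 2 Ω)
    (f fhat : EuclideanSpace ℝ (Fin 2) → ℝ) (L : ℝ) (hL : 0 ≤ L)
    (hf : ∀ x ∈ Ω, ∀ y ∈ Ω, |f x - f y| ≤ L * dist x y)
    (hinterp : ∀ i k, fhat (P.verts i k) = f (P.verts i k))
    (haff : ∀ i, ∃ (g : EuclideanSpace ℝ (Fin 2)) (b : ℝ),
        ∀ x ∈ convexHull ℝ (Set.range (P.verts i)), fhat x = ⟪g, x⟫ + b)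
    (α : ℝ) (hα : 0 < α)
    (hangle : ∀ i,
      α ≤ EuclideanGeometry.angle (P.verts i 1) (P.verts i 0) (P.verts i 2) ∧
      α ≤ EuclideanGeometry.angle (P.verts i 0) (P.verts i 1) (P.verts i 2) ∧
      α ≤ EuclideanGeometry.angle (P.verts i 0) (P.verts i 2) (P.verts i 1)) :
    ∀ x ∈ Ω, ∀ y ∈ Ω, |fhat x - fhat y| ≤ (L / Real.sin α) * dist x y := by
  intro x hx y hy
  haveI : Fintype P.ι := P.fin
  classical
  obtain ⟨i0, hxi0⟩ : ∃ i, x ∈ convexHull ℝ (Set.range (P.verts i)) := by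
    rw [← P.covers] at hx; exact Set.mem_iUnion.1 hx
  have key : ∀ i : P.ι, ∃ g : EuclideanSpace ℝ (Fin 2), ∃ bc : ℝ,
      (∀ z ∈ convexHull ℝ (Set.range (P.verts i)), fhat z = ⟪g, z⟫ + bc) ∧
      0 < Real.sin α ∧ ‖g‖ ≤ L / Real.sin α := by
    intro i
    obtain ⟨g, bc, hgbc⟩ := haff i
    have hTΩ : convexHull ℝ (Set.range (P.verts i)) ⊆ Ω := by
      intro z hz
      rw [← P.covers]
      exact Set.mem_iUnion.2 ⟨i, hz⟩
    have hvT : ∀ k, P.verts i k ∈ convexHull ℝ (Set.range (P.verts i)) :=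
      fun k => subset_convexHull ℝ _ (Set.mem_range_self k)
    have hvΩ : ∀ k, P.verts i k ∈ Ω := fun k => hTΩ (hvT k)
    have he : ∀ j k, |⟪g, P.verts i j - P.verts i k⟫| ≤ L * ‖P.verts i j - P.verts i k‖ := by
      intro j k
      have e1 : ⟪g, P.verts i j - P.verts i k⟫ = f (P.verts i j) - f (P.verts i k) := by
        rw [inner_sub_right]
        have ej := hgbc _ (hvT j)
        have ek := hgbc _ (hvT k)
        have ij := hinterp i j
        have ik := hinterp i k
        linarith [ej, ek, ij, ik]
      rw [e1, ← dist_eq_norm]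
      exact hf _ (hvΩ j) _ (hvΩ k)
    obtain ⟨ha0, ha1, ha2⟩ := hangle i
    obtain ⟨hsin, hbd⟩ :=
      triangle_grad_bound hL hα (P.verts i) (P.indep i) ha0 ha1 ha2 g he
    exact ⟨g, bc, hgbc, hsin, hbd⟩
  choose G B hGB hsin' hGbd using key
  have hsin : 0 < Real.sin α := hsin' i0
  set K := L / Real.sin α * dist x y with hK
  set γ : ℝ → EuclideanSpace ℝ (Fin 2) := fun t => x + t • (y - x) with hγ
  have hγcont : Continuous γ := by
    exact continuous_const.add (continuous_id.smul continuous_const)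
  set I : P.ι → Set ℝ := fun i => γ ⁻¹' (convexHull ℝ (Set.range (P.verts i))) with hI
  have hIcl : ∀ i, IsClosed (I i) := fun i =>
    (((Set.finite_range (P.verts i)).isCompact_convexHull ℝ).isClosed).preimage hγcont
  have hlip : ∀ i, ∀ u ∈ I i, ∀ w ∈ I i,
      |(fun t => fhat (γ t)) u - (fun t => fhat (γ t)) w| ≤ K * |u - w| := by
    intro i u hu w hw
    have eu := hGB i _ (Set.mem_preimage.1 hu)
    have ew := hGB i _ (Set.mem_preimage.1 hw)
    simp only
    have hdiff : fhat (γ u) - fhat (γ w) = (u - w) * ⟪G i, y - x⟫ := by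
      rw [eu, ew]
      have e2 : (⟪G i, γ u⟫ + B i) - (⟪G i, γ w⟫ + B i) = ⟪G i, γ u - γ w⟫ := by
        rw [inner_sub_right]; ring
      have e3 : γ u - γ w = (u - w) • (y - x) := by simp only [hγ]; module
      rw [e2, e3, real_inner_smul_right]
    rw [hdiff, abs_mul]
    have hb1 : |⟪G i, y - x⟫| ≤ ‖G i‖ * ‖y - x‖ := abs_real_inner_le_norm _ _
    have hb2 : ‖G i‖ * ‖y - x‖ ≤ L / Real.sin α * ‖y - x‖ :=
      mul_le_mul_of_nonneg_right (hGbd i) (norm_nonneg _)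
    have hyx : ‖y - x‖ = dist x y := by rw [dist_eq_norm, norm_sub_rev]
    calc |u - w| * |⟪G i, y - x⟫| ≤ |u - w| * (L / Real.sin α * ‖y - x‖) := by
          exact mul_le_mul_of_nonneg_left (hb1.trans hb2) (abs_nonneg _)
      _ = K * |u - w| := by rw [hyx, hK]; ring
  have hcov : Set.Icc (0:ℝ) 1 ⊆ ⋃ k ∈ (Finset.univ : Finset P.ι), I k := by
    intro t ht
    obtain ⟨ht0, ht1⟩ := Set.mem_Icc.1 ht
    have hγΩ : γ t ∈ Ω := by
      have hmem := hΩconv hx hy (by linarith : (0:ℝ) ≤ 1 - t) ht0 (by ring)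
      have : γ t = (1 - t) • x + t • y := by simp only [hγ]; module
      rwa [this]
    rw [← P.covers] at hγΩ
    obtain ⟨i, hi⟩ := Set.mem_iUnion.1 hγΩ
    exact Set.mem_biUnion (Finset.mem_univ i) hi
  have hmain := lip_of_closed_cover K (fun t => fhat (γ t)) I hIcl hlip
    Finset.univ 0 1 zero_le_one hcov
  have hγ0 : γ 0 = x := by simp [hγ]
  have hγ1 : γ 1 = y := by simp [hγ]
  have hmain' : |fhat (γ 1) - fhat (γ 0)| ≤ K * (1 - 0) := hmain
  rw [hγ0, hγ1, abs_sub_comm] at hmain'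
  calc |fhat x - fhat y| ≤ K * (1 - 0) := hmain'
    _ = L / Real.sin α * dist x y := by rw [hK]; ring
end
end

section
/- Let ε > 0 and suppose that for every simplex T ∈ 𝒯 a finite set X_T ⊂ T covers T with radius r_T = ε / (2(L + L̂_T)), where L̂_T = ‖∇f̂_T‖, and that max_{x ∈ X_T} |f(x) − f̂(x)| ≤ ε/2 for every T ∈ 𝒯. Then max_{x ∈ Ω} |f(x) − f̂(x)| ≤ ε. -/
open scoped RealInnerProductSpace

noncomputable section

/-!
STATEMENT 6: Let `ε > 0` and suppose that for every simplex `T ∈ 𝒯` (on which the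
piecewise-linear interpolation `f̂` of the `L`-Lipschitz function `f` is give by
`f̂ x = ⟪g i, x⟫ + b i`, so `L̂_T = ‖g i‖`) a finite set `X_T ⊂ T` covers `T` with
radius `r_T = ε / (2 (L + L̂_T))`, and that `max_{x ∈ X_T} |f x − f̂ x| ≤ ε/2` for
every `T ∈ 𝒯`.  Then `max_{x ∈ Ω} |f x − f̂ x| ≤ ε`.
-/

theorem max_error_bound
    {d : ℕ} {Ω : Set (EuclideanSpace ℝ (Fin d))}
    (hΩbd : Bornology.IsBounded Ω)
    (P : SimplicialPartition d Ω)
    (f fhat : EuclideanSpace ℝ (Fin d) → ℝ) (L : ℝ) (hL : 0 ≤ L)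
    (hf : ∀ x ∈ Ω, ∀ y ∈ Ω, |f x - f y| ≤ L * dist x y)
    (hinterp : ∀ i k, fhat (P.verts i k) = f (P.verts i k))
    (g : P.ι → EuclideanSpace ℝ (Fin d)) (b : P.ι → ℝ)
    (haff : ∀ i, ∀ x ∈ convexHull ℝ (Set.range (P.verts i)), fhat x = ⟪g i, x⟫ + b i)
    (ε : ℝ) (hε : 0 < ε)
    (X : P.ι → Finset (EuclideanSpace ℝ (Fin d)))
    (hX : ∀ i, ↑(X i) ⊆ convexHull ℝ (Set.range (P.verts i)))
    (hcover : ∀ i, convexHull ℝ (Set.range (P.verts i)) ⊆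
        ⋃ x ∈ X i, Metric.closedBall x (ε / (2 * (L + ‖g i‖))))
    (hsample : ∀ i, ∀ x ∈ X i, |f x - fhat x| ≤ ε / 2) :
    ∀ x ∈ Ω, |f x - fhat x| ≤ ε := by
  intro x hx
  rw [← P.covers] at hx
  obtain ⟨_, ⟨i, rfl⟩, hxi⟩ := hx
  obtain ⟨_, ⟨y, rfl⟩, hy⟩ := hcover i hxi
  simp only [Set.mem_iUnion, Metric.mem_closedBall] at hy
  obtain ⟨hyX, hxy⟩ := hy
  have hyT : y ∈ convexHull ℝ (Set.range (P.verts i)) := hX i hyX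
  have hxΩ : x ∈ Ω := by rw [← P.covers]; exact Set.mem_iUnion.mpr ⟨i, hxi⟩
  have hyΩ : y ∈ Ω := by rw [← P.covers]; exact Set.mem_iUnion.mpr ⟨i, hyT⟩
  have hg : (0:ℝ) ≤ ‖g i‖ := norm_nonneg _
  have key : (L + ‖g i‖) * dist x y ≤ ε / 2 := by
    rcases eq_or_lt_of_le (add_nonneg hL hg) with h0 | h0
    · rw [← h0, zero_mul]; positivity
    · have : dist x y ≤ ε / (2 * (L + ‖g i‖)) := hxy
      calc (L + ‖g i‖) * dist x y ≤ (L + ‖g i‖) * (ε / (2 * (L + ‖g i‖))) := by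
            exact mul_le_mul_of_nonneg_left this (le_of_lt h0)
        _ = ε / 2 := by field_simp
  have hlin : |fhat y - fhat x| ≤ ‖g i‖ * dist x y := by
    rw [haff i x hxi, haff i y hyT]
    have : (⟪g i, y⟫ + b i) - (⟪g i, x⟫ + b i) = ⟪g i, y - x⟫ := by
      rw [inner_sub_right]; ring
    rw [this]
    calc |⟪g i, y - x⟫| ≤ ‖g i‖ * ‖y - x‖ := abs_real_inner_le_norm _ _
      _ = ‖g i‖ * dist x y := by rw [dist_eq_norm, norm_sub_rev]
  calc |f x - fhat x| ≤ |f x - f y| + |f y - fhat y| + |fhat y - fhat x| := by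
        have := abs_sub_le (f x) (f y) (fhat x)
        have := abs_sub_le (f y) (fhat y) (fhat x)
        linarith [abs_sub_le (f x) (f y) (fhat x), abs_sub_le (f y) (fhat y) (fhat x)]
    _ ≤ L * dist x y + ε / 2 + ‖g i‖ * dist x y := by
        gcongr
        · exact hf x hxΩ y hyΩ
        · exact hsample i y hyX
    _ = (L + ‖g i‖) * dist x y + ε / 2 := by ring
    _ ≤ ε / 2 + ε / 2 := by linarith
    _ = ε := by ring
end
end

section
/- Let 𝒫 = {P_1, …, P_m} be a polyhedral partition of a bounded domain Ω ⊆ ℝ^d, let S_i = vert(P_i) be the vertex set of P_i, V = ⋃_{i=1}^m S_i, and 𝒮 = {S_1, …, S_m}. Then every minimal infeasible set for 𝒮 has cardinality at most d+1; equivalently, the rank of the conflict hypergraph of 𝒮 is at most d+1. -/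
/-!
STATEMENT 7: Let `𝒫 = {P_1, …, P_m}` be a polyhedral partition of a bounded domain
`Ω ⊆ ℝ^d`: each `P_i` is a `d`-dimensional convex polytope, given as the convex hull
of its (finite) vertex set `S i` (the set of extreme points), the polytopes cover
`Ω`, and any two intersect in a common face (an extreme subset) of both.  With
`V = ⋃ S i` and `𝒮 = {S_1, …, S_m}`, every minimal infeasible set `C` for `𝒮`
(`C` is contained in no `S i`, but every proper subset of `C` is) has cardinality at
most `d + 1`; equivalently, the rank of the conflict hypergraph of `𝒮` is at most
`d + 1`.
-/

open Set Finset

lemma extreme_absorb {E : Type*} [AddCommGroup E] [Module ℝ E] {A F : Set E}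
    (hA : Convex ℝ A) (hAF : IsExtreme ℝ A F) (t : Finset E) (w : E → ℝ)
    (hw : ∀ x ∈ t, 0 < w x) (hw1 : ∑ x ∈ t, w x = 1) (htA : ↑t ⊆ A)
    (hz : t.centerMass w id ∈ F) : ↑t ⊆ F := by
  classical
  intro x hx
  rw [Finset.mem_coe] at hx
  rcases eq_or_ne (t.erase x) ∅ with he | he
  · have ht : t = {x} := by
      rcases (Finset.erase_eq_empty_iff t x).mp he with h | h
      · exact absurd (h ▸ hx) (Finset.notMem_empty x)
      · exact h
    subst ht
    rwa [Finset.centerMass_singleton _ _ (ne_of_gt (hw x hx))] at hz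
  · set t' := t.erase x with ht'
    have hs : 0 < ∑ y ∈ t', w y := by
      apply Finset.sum_pos (fun y hy => hw y (Finset.mem_of_mem_erase hy))
      exact Finset.nonempty_of_ne_empty he
    set s := ∑ y ∈ t', w y with hsdef
    have hwxs : w x + s = 1 := by
      rw [hsdef, ht', Finset.add_sum_erase _ _ hx, hw1]
    set y := t'.centerMass w id with hy
    have hyA : y ∈ A := by
      have : y ∈ convexHull ℝ A :=
        Finset.centerMass_mem_convexHull t'
          (fun i hi => (hw i (Finset.mem_of_mem_erase hi)).le) hs
          (fun i hi => htA (Finset.mem_of_mem_erase hi))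
      rwa [hA.convexHull_eq] at this
    have hzeq : t.centerMass w id = w x • x + s • y := by
      rw [Finset.centerMass_eq_of_sum_1 _ _ hw1, hy, Finset.centerMass,
        smul_inv_smul₀ (ne_of_gt hs), ← Finset.add_sum_erase _ _ hx]
      rfl
    have hseg : t.centerMass w id ∈ openSegment ℝ x y :=
      ⟨w x, s, hw x hx, hs, hwxs, hzeq.symm⟩
    exact hAF.2 (htA hx) hyA hz hseg

theorem conflict_hypergraph_rank_le
    {d m : ℕ} (hm : 0 < m) {Ω : Set (EuclideanSpace ℝ (Fin d))}
    (hΩbd : Bornology.IsBounded Ω)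
    (S : Fin m → Finset (EuclideanSpace ℝ (Fin d)))
    (hdim : ∀ i, affineSpan ℝ (↑(S i) : Set (EuclideanSpace ℝ (Fin d))) = ⊤)
    (hvert : ∀ i, (↑(S i) : Set (EuclideanSpace ℝ (Fin d)))
        = Set.extremePoints ℝ (convexHull ℝ (↑(S i) : Set (EuclideanSpace ℝ (Fin d)))))
    (hcover : (⋃ i, convexHull ℝ (↑(S i) : Set (EuclideanSpace ℝ (Fin d)))) = Ω)
    (hface : ∀ i j, IsExtreme ℝ (convexHull ℝ (↑(S i) : Set (EuclideanSpace ℝ (Fin d))))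
        (convexHull ℝ (↑(S i) : Set (EuclideanSpace ℝ (Fin d)))
          ∩ convexHull ℝ (↑(S j) : Set (EuclideanSpace ℝ (Fin d)))))
    (C : Finset (EuclideanSpace ℝ (Fin d)))
    (hCV : ∀ x ∈ C, ∃ i, x ∈ S i)
    (hinfeas : ¬ ∃ i, C ⊆ S i)
    (hmin : ∀ C' ⊂ C, ∃ i, C' ⊆ S i) :
    C.card ≤ d + 1 := by
  classical
  by_contra hcard
  push_neg at hcard
  set f : {u // u ∈ C} → EuclideanSpace ℝ (Fin d) := Subtype.val with hfdef
  have hfinj : Function.Injective f := Subtype.val_injective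
  -- the points of C are affinely dependent
  have hdep : ¬ AffineIndependent ℝ f := by
    intro h
    have h1 := h.card_le_finrank_succ
    have h2 : Module.finrank ℝ ↥(vectorSpan ℝ (Set.range f)) ≤ d := by
      have h3 := Submodule.finrank_le (vectorSpan ℝ (Set.range f))
      rwa [finrank_euclideanSpace_fin] at h3
    rw [Fintype.card_coe] at h1
    omega
  obtain ⟨I, z, hzI, hzIc⟩ := Convex.radon_partition (𝕜 := ℝ) hdep
  -- turn the first hull membership into a finset combination
  have hfin : (f '' I).Finite :=
    C.finite_toSet.subset (by rintro _ ⟨a, _, rfl⟩; exact a.2)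
  set t1 : Finset (EuclideanSpace ℝ (Fin d)) := hfin.toFinset with ht1
  have ht1coe : (↑t1 : Set (EuclideanSpace ℝ (Fin d))) = f '' I := hfin.coe_toFinset
  have hzt1 : z ∈ convexHull ℝ (↑t1 : Set (EuclideanSpace ℝ (Fin d))) := by
    rw [ht1coe]; exact hzI
  rw [Finset.convexHull_eq] at hzt1
  obtain ⟨w, hw0, hw1, hwz⟩ := hzt1
  set t1' := t1.filter (fun y => w y ≠ 0) with ht1'
  have hcm : t1'.centerMass w id = z := by
    rw [ht1', Finset.centerMass_filter_ne_zero, hwz]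
  have hsum' : ∑ y ∈ t1', w y = 1 := by
    rw [ht1', Finset.sum_filter_ne_zero, hw1]
  have hpos : ∀ x ∈ t1', 0 < w x := by
    intro x hx
    rw [ht1', Finset.mem_filter] at hx
    exact lt_of_le_of_ne (hw0 x hx.1) (Ne.symm hx.2)
  have ht1'ne : t1'.Nonempty := by
    rcases Finset.eq_empty_or_nonempty t1' with h | h
    · rw [h, Finset.sum_empty] at hsum'; norm_num at hsum'
    · exact h
  obtain ⟨x, hxt1'⟩ := ht1'ne
  have hxt1 : x ∈ t1 := Finset.mem_of_mem_filter x hxt1'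
  have hxI : x ∈ f '' I := by rw [← ht1coe]; exact hxt1
  have hxC : x ∈ C := by obtain ⟨a, _, rfl⟩ := hxI; exact a.2
  -- a point of the other side
  have hIcne : (f '' Iᶜ).Nonempty := by
    by_contra h
    rw [Set.not_nonempty_iff_eq_empty] at h
    rw [h, convexHull_empty] at hzIc
    exact hzIc
  obtain ⟨y, hyIc⟩ := hIcne
  have hyC : y ∈ C := by obtain ⟨a, _, rfl⟩ := hyIc; exact a.2
  -- choose the two covering sets
  obtain ⟨j, hj⟩ := hmin (C.erase x) (Finset.erase_ssubset hxC)
  obtain ⟨i, hi⟩ := hmin (C.erase y) (Finset.erase_ssubset hyC)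
  have ht1Si : (↑t1 : Set (EuclideanSpace ℝ (Fin d))) ⊆ ↑(S i) := by
    intro u hu
    rw [ht1coe] at hu
    obtain ⟨a, haI, rfl⟩ := hu
    have huy : f a ≠ y := by
      intro h
      obtain ⟨b, hbI, hb⟩ := hyIc
      exact hbI ((hfinj (hb.trans h.symm)) ▸ haI)
    exact hi (Finset.mem_erase.mpr ⟨huy, a.2⟩)
  have hIcSj : f '' Iᶜ ⊆ ↑(S j) := by
    rintro _ ⟨a, haIc, rfl⟩
    have hax : f a ≠ x := by
      intro h
      obtain ⟨b, hbI, hb⟩ := hxI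
      exact haIc ((hfinj (h.trans hb.symm)) ▸ hbI)
    exact hj (Finset.mem_erase.mpr ⟨hax, a.2⟩)
  have hzi : z ∈ convexHull ℝ (↑(S i) : Set (EuclideanSpace ℝ (Fin d))) := by
    have hz1 : z ∈ convexHull ℝ (↑t1 : Set (EuclideanSpace ℝ (Fin d))) := by
      rw [← hwz]
      exact Finset.centerMass_mem_convexHull t1 hw0 (by rw [hw1]; norm_num)
        (fun u hu => Finset.mem_coe.mpr hu)
    exact convexHull_mono ht1Si hz1
  have hzj : z ∈ convexHull ℝ (↑(S j) : Set (EuclideanSpace ℝ (Fin d))) :=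
    convexHull_mono hIcSj hzIc
  have hzF : z ∈ convexHull ℝ (↑(S i) : Set (EuclideanSpace ℝ (Fin d)))
      ∩ convexHull ℝ (↑(S j) : Set (EuclideanSpace ℝ (Fin d))) := ⟨hzi, hzj⟩
  have habs : (↑t1' : Set (EuclideanSpace ℝ (Fin d)))
      ⊆ convexHull ℝ (↑(S i) : Set (EuclideanSpace ℝ (Fin d)))
        ∩ convexHull ℝ (↑(S j) : Set (EuclideanSpace ℝ (Fin d))) := by
    apply extreme_absorb (convex_convexHull ℝ _) (hface i j) t1' w hpos hsum'
    · intro u hu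
      exact subset_convexHull ℝ _ (ht1Si (Finset.coe_subset.mpr (Finset.filter_subset _ _) hu))
    · rw [hcm]; exact hzF
  have hxF : x ∈ convexHull ℝ (↑(S i) : Set (EuclideanSpace ℝ (Fin d)))
      ∩ convexHull ℝ (↑(S j) : Set (EuclideanSpace ℝ (Fin d))) :=
    habs (Finset.mem_coe.mpr hxt1')
  have hxSi : x ∈ (↑(S i) : Set (EuclideanSpace ℝ (Fin d))) :=
    ht1Si (Finset.mem_coe.mpr hxt1)
  have hxep : x ∈ Set.extremePoints ℝ (convexHull ℝ (↑(S i) : Set (EuclideanSpace ℝ (Fin d)))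
      ∩ convexHull ℝ (↑(S j) : Set (EuclideanSpace ℝ (Fin d)))) := by
    apply inter_extremePoints_subset_extremePoints_of_subset Set.inter_subset_left
    refine ⟨hxF, ?_⟩
    rw [← hvert i]
    exact hxSi
  have hxSj : x ∈ S j := by
    have h1 : IsExtreme ℝ (convexHull ℝ (↑(S j) : Set (EuclideanSpace ℝ (Fin d))))
        (convexHull ℝ (↑(S i) : Set (EuclideanSpace ℝ (Fin d)))
          ∩ convexHull ℝ (↑(S j) : Set (EuclideanSpace ℝ (Fin d)))) := by
      rw [Set.inter_comm]; exact hface j i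
    have h2 := h1.extremePoints_subset_extremePoints hxep
    rw [← hvert j] at h2
    exact h2
  refine hinfeas ⟨j, fun c hc => ?_⟩
  rcases eq_or_ne c x with rfl | hcx
  · exact hxSj
  · exact hj (Finset.mem_erase.mpr ⟨hcx, hc⟩)
end

section
/- Let 𝒮' be the set system obtained from 𝒮 by splitting the edge (u,v) by the new vertex w. If C is a minimal infeasible set for 𝒮' with |C| ≥ 3 and w ∉ C, then C is a minimal infeasible set for 𝒮 (i.e. it was already a minimal infeasible set before the split). -/
variable {α : Type*}

/-- `F` is feasible for the set system `𝒮` if it is contained in some member of `𝒮`;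
it is infeasible otherwise. -/
def Feasible (𝒮 : Finset (Finset α)) (F : Finset α) : Prop :=
  ∃ S ∈ 𝒮, F ⊆ S

/-- `C` is a minimal infeasible (conflict) set for `𝒮`: `C` is infeasible but every
proper subset of `C` is feasible. -/
def MinimalInfeasible (𝒮 : Finset (Finset α)) (C : Finset α) : Prop :=
  ¬ Feasible 𝒮 C ∧ ∀ C' ⊂ C, Feasible 𝒮 C'

/-- Splitting the edge `(u,v)` by the new vertex `w`: every member `S` of `𝒮`
containing both `u` and `v` is replaced by the two sets `S_u = (S \ {u}) ∪ {w}` and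
`S_v = (S \ {v}) ∪ {w}`; all the other members are left unchanged. -/
def splitSystem [DecidableEq α] (𝒮 : Finset (Finset α)) (u v w : α) :
    Finset (Finset α) :=
  ((𝒮.filter fun S => u ∈ S ∧ v ∈ S).image fun S => insert w (S.erase u)) ∪
    ((𝒮.filter fun S => u ∈ S ∧ v ∈ S).image fun S => insert w (S.erase v)) ∪
    (𝒮.filter fun S => ¬ (u ∈ S ∧ v ∈ S))

/-!
STATEMENT 9: Let `𝒮'` be the set system obtained from `𝒮` by splitting the edge
`(u,v)` by the new vertex `w` (here `u ≠ v`, `{u,v}` is contained in at least one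
member of `𝒮`, and `w` lies outside `V = ⋃ 𝒮`).  If `C` is a minimal infeasible set
for `𝒮'` with `|C| ≥ 3` and `w ∉ C`, then `C` was already a minimal infeasible set
for `𝒮` before the split.
-/

theorem split_preserves_old_conflicts {α : Type*} [DecidableEq α]
    (𝒮 : Finset (Finset α)) (u v w : α) (huv : u ≠ v)
    (huvS : ∃ S ∈ 𝒮, u ∈ S ∧ v ∈ S)
    (hw : ∀ S ∈ 𝒮, w ∉ S)
    (C : Finset α) (hcard : 3 ≤ C.card) (hwC : w ∉ C)
    (hC : MinimalInfeasible (splitSystem 𝒮 u v w) C) :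
    MinimalInfeasible 𝒮 C := by
  have memSplit : ∀ T, T ∈ splitSystem 𝒮 u v w ↔
      (∃ S ∈ 𝒮, (u ∈ S ∧ v ∈ S) ∧ T = insert w (S.erase u)) ∨
      (∃ S ∈ 𝒮, (u ∈ S ∧ v ∈ S) ∧ T = insert w (S.erase v)) ∨
      (T ∈ 𝒮 ∧ ¬ (u ∈ T ∧ v ∈ T)) := by
    intro T
    simp only [splitSystem, Finset.mem_union, Finset.mem_image, Finset.mem_filter]
    constructor
    · rintro ((⟨S, ⟨hS, hS2⟩, rfl⟩ | ⟨S, ⟨hS, hS2⟩, rfl⟩) | h)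
      · exact Or.inl ⟨S, hS, hS2, rfl⟩
      · exact Or.inr (Or.inl ⟨S, hS, hS2, rfl⟩)
      · exact Or.inr (Or.inr h)
    · rintro (⟨S, hS, hS2, rfl⟩ | ⟨S, hS, hS2, rfl⟩ | h)
      · exact Or.inl (Or.inl ⟨S, ⟨hS, hS2⟩, rfl⟩)
      · exact Or.inl (Or.inr ⟨S, ⟨hS, hS2⟩, rfl⟩)
      · exact Or.inr h
  constructor
  · -- C infeasible for 𝒮
    rintro ⟨S, hS, hCS⟩
    by_cases huvS' : u ∈ S ∧ v ∈ S
    · -- u and v must both be in C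
      have hu : u ∈ C := by
        by_contra hu
        apply hC.1
        refine ⟨insert w (S.erase u), (memSplit _).2 (Or.inl ⟨S, hS, huvS', rfl⟩), ?_⟩
        intro x hx
        exact Finset.mem_insert_of_mem (Finset.mem_erase.2
          ⟨fun h => hu (h ▸ hx), hCS hx⟩)
      have hv : v ∈ C := by
        by_contra hv
        apply hC.1
        refine ⟨insert w (S.erase v), (memSplit _).2 (Or.inr (Or.inl ⟨S, hS, huvS', rfl⟩)), ?_⟩
        intro x hx
        exact Finset.mem_insert_of_mem (Finset.mem_erase.2
          ⟨fun h => hv (h ▸ hx), hCS hx⟩)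
      -- pick x in C other than u, v
      have hne : ((C.erase u).erase v).Nonempty := by
        rw [← Finset.card_pos]
        have h1 : C.card - 1 ≤ (C.erase u).card := Finset.pred_card_le_card_erase
        have h2 : (C.erase u).card - 1 ≤ ((C.erase u).erase v).card :=
          Finset.pred_card_le_card_erase
        omega
      obtain ⟨x, hx⟩ := hne
      rw [Finset.mem_erase, Finset.mem_erase] at hx
      obtain ⟨hxv, hxu, hxC⟩ := hx
      obtain ⟨T, hT, hsub⟩ := hC.2 (C.erase x) (Finset.erase_ssubset hxC)
      have huT : u ∈ T := hsub (Finset.mem_erase.2 ⟨hxu.symm, hu⟩)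
      have hvT : v ∈ T := hsub (Finset.mem_erase.2 ⟨hxv.symm, hv⟩)
      rcases (memSplit T).1 hT with ⟨S', hS', hS'2, rfl⟩ | ⟨S', hS', hS'2, rfl⟩ | ⟨hT𝒮, hT2⟩
      · rcases Finset.mem_insert.1 huT with h | h
        · exact hw S' hS' (h ▸ hS'2.1)
        · exact (Finset.mem_erase.1 h).1 rfl
      · rcases Finset.mem_insert.1 hvT with h | h
        · exact hw S' hS' (h ▸ hS'2.2)
        · exact (Finset.mem_erase.1 h).1 rfl
      · exact hT2 ⟨huT, hvT⟩
    · exact hC.1 ⟨S, (memSplit _).2 (Or.inr (Or.inr ⟨hS, huvS'⟩)), hCS⟩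
  · -- proper subsets feasible for 𝒮
    intro C' hC'
    obtain ⟨T, hT, hsub⟩ := hC.2 C' hC'
    have hwC' : w ∉ C' := fun h => hwC (hC'.1 h)
    rcases (memSplit T).1 hT with ⟨S, hS, hS2, rfl⟩ | ⟨S, hS, hS2, rfl⟩ | ⟨hT𝒮, _⟩
    · refine ⟨S, hS, fun x hx => ?_⟩
      rcases Finset.mem_insert.1 (hsub hx) with h | h
      · exact absurd (h ▸ hx) hwC'
      · exact Finset.mem_of_mem_erase h
    · refine ⟨S, hS, fun x hx => ?_⟩
      rcases Finset.mem_insert.1 (hsub hx) with h | h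
      · exact absurd (h ▸ hx) hwC'
      · exact Finset.mem_of_mem_erase h
    · exact ⟨T, hT𝒮, hsub⟩
end

section
/- Let 𝒮' be the set system obtained from 𝒮 by splitting the edge (u,v) by the new vertex w, and suppose C is a minimal infeasible set for 𝒮' with |C| ≥ 3 that is not a minimal infeasible set for 𝒮 (a new minimal conflict set). Then w ∈ C, and at least one of the following three sets is a minimal infeasible set for 𝒮 (before the split): (i) (C \ {w}) ∪ {u}, (ii) (C \ {w}) ∪ {v}, (iii) (C \ {w}) ∪ {u,v}. -/
variable {α : Type*}

/-!
STATEMENT 10: Let `𝒮'` be the set system obtained from `𝒮` by splitting the edge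
`(u,v)` by the new vertex `w`, and suppose `C` is a minimal infeasible set for `𝒮'`
with `|C| ≥ 3` that is not a minimal infeasible set for `𝒮` (a new minimal conflict
set).  Then `w ∈ C`, and at least one of the sets `(C \ {w}) ∪ {u}`,
`(C \ {w}) ∪ {v}`, `(C \ {w}) ∪ {u,v}` is a minimal infeasible set for `𝒮`
(before the split).
-/

lemma feas_mono {𝒮 : Finset (Finset α)} {F G : Finset α} (h : F ⊆ G)
    (hG : Feasible 𝒮 G) : Feasible 𝒮 F := by
  obtain ⟨S, hS, hGS⟩ := hG
  exact ⟨S, hS, h.trans hGS⟩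

lemma mem_splitSystem [DecidableEq α] {𝒮 : Finset (Finset α)} {u v w : α}
    {T : Finset α} :
    T ∈ splitSystem 𝒮 u v w ↔
      (∃ S ∈ 𝒮, (u ∈ S ∧ v ∈ S) ∧
        (T = insert w (S.erase u) ∨ T = insert w (S.erase v)))
      ∨ (T ∈ 𝒮 ∧ ¬ (u ∈ T ∧ v ∈ T)) := by
  simp only [splitSystem, Finset.mem_union, Finset.mem_image, Finset.mem_filter]
  constructor
  · rintro ((⟨S, ⟨hS, h⟩, rfl⟩ | ⟨S, ⟨hS, h⟩, rfl⟩) | ⟨hT, h⟩)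
    · exact Or.inl ⟨S, hS, h, Or.inl rfl⟩
    · exact Or.inl ⟨S, hS, h, Or.inr rfl⟩
    · exact Or.inr ⟨hT, h⟩
  · rintro (⟨S, hS, h, (rfl | rfl)⟩ | ⟨hT, h⟩)
    · exact Or.inl (Or.inl ⟨S, ⟨hS, h⟩, rfl⟩)
    · exact Or.inl (Or.inr ⟨S, ⟨hS, h⟩, rfl⟩)
    · exact Or.inr ⟨hT, h⟩

theorem split_new_conflict_cases {α : Type*} [DecidableEq α]
    (𝒮 : Finset (Finset α)) (u v w : α) (huv : u ≠ v)
    (huvS : ∃ S ∈ 𝒮, u ∈ S ∧ v ∈ S)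
    (hw : ∀ S ∈ 𝒮, w ∉ S)
    (C : Finset α) (hcard : 3 ≤ C.card)
    (hC : MinimalInfeasible (splitSystem 𝒮 u v w) C)
    (hnew : ¬ MinimalInfeasible 𝒮 C) :
    w ∈ C ∧
      (MinimalInfeasible 𝒮 (insert u (C.erase w)) ∨
        MinimalInfeasible 𝒮 (insert v (C.erase w)) ∨
        MinimalInfeasible 𝒮 (insert u (insert v (C.erase w)))) := by
  obtain ⟨hCinf, hCmin⟩ := hC
  obtain ⟨S0, hS0, hu0, hv0⟩ := huvS
  have hwu : w ≠ u := fun h => hw S0 hS0 (h ▸ hu0)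
  have hwv : w ≠ v := fun h => hw S0 hS0 (h ▸ hv0)
  -- L1 : no member of the split system contains both u and v
  have hL1 : ∀ T ∈ splitSystem 𝒮 u v w, ¬ (u ∈ T ∧ v ∈ T) := by
    intro T hT
    rcases mem_splitSystem.mp hT with ⟨S, hS, _, (rfl | rfl)⟩ | ⟨_, h⟩
    · rintro ⟨hu, _⟩
      rcases Finset.mem_insert.mp hu with h | h
      · exact hwu h.symm
      · exact (Finset.mem_erase.mp h).1 rfl
    · rintro ⟨_, hv⟩
      rcases Finset.mem_insert.mp hv with h | h
      · exact hwv h.symm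
      · exact (Finset.mem_erase.mp h).1 rfl
    · exact h
  -- not both u, v in C
  have hnotboth : ¬ (u ∈ C ∧ v ∈ C) := by
    rintro ⟨hu, hv⟩
    have hsub : ({u, v} : Finset α) ⊂ C := by
      rw [Finset.ssubset_iff_subset_ne]
      constructor
      · intro x hx
        rcases Finset.mem_insert.mp hx with rfl | hx
        · exact hu
        · exact Finset.mem_singleton.mp hx ▸ hv
      · intro h
        have h2 : ({u, v} : Finset α).card = 2 := Finset.card_pair huv
        rw [h] at h2
        omega
    obtain ⟨T, hT, hsubT⟩ := hCmin _ hsub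
    exact hL1 T hT ⟨hsubT (by simp), hsubT (by simp)⟩
  -- L2 : w-free feasible sets for 𝒮' are feasible for 𝒮
  have hL2 : ∀ F : Finset α, w ∉ F → Feasible (splitSystem 𝒮 u v w) F →
      Feasible 𝒮 F := by
    intro F hwF ⟨T, hT, hFT⟩
    rcases mem_splitSystem.mp hT with ⟨S, hS, _, (rfl | rfl)⟩ | ⟨hT𝒮, _⟩
    · refine ⟨S, hS, fun x hx => ?_⟩
      rcases Finset.mem_insert.mp (hFT hx) with h | h
      · exact absurd (h ▸ hx) hwF
      · exact Finset.mem_of_mem_erase h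
    · refine ⟨S, hS, fun x hx => ?_⟩
      rcases Finset.mem_insert.mp (hFT hx) with h | h
      · exact absurd (h ▸ hx) hwF
      · exact Finset.mem_of_mem_erase h
    · exact ⟨T, hT𝒮, hFT⟩
  -- w ∈ C
  have hwC : w ∈ C := by
    by_contra hwC
    apply hnew
    constructor
    · rintro ⟨S, hS, hCS⟩
      by_cases h : u ∈ S ∧ v ∈ S
      · rcases not_and_or.mp hnotboth with hu | hv
        · refine hCinf ⟨insert w (S.erase u),
            mem_splitSystem.mpr (Or.inl ⟨S, hS, h, Or.inl rfl⟩), fun x hx => ?_⟩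
          exact Finset.mem_insert_of_mem (Finset.mem_erase.mpr
            ⟨fun hxu => hu (hxu ▸ hx), hCS hx⟩)
        · refine hCinf ⟨insert w (S.erase v),
            mem_splitSystem.mpr (Or.inl ⟨S, hS, h, Or.inr rfl⟩), fun x hx => ?_⟩
          exact Finset.mem_insert_of_mem (Finset.mem_erase.mpr
            ⟨fun hxv => hv (hxv ▸ hx), hCS hx⟩)
      · exact hCinf ⟨S, mem_splitSystem.mpr (Or.inr ⟨hS, h⟩), hCS⟩
    · intro C' hC'
      exact hL2 _ (fun h => hwC (hC'.1 h)) (hCmin _ hC')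
  refine ⟨hwC, ?_⟩
  set D := C.erase w with hDdef
  have hDC : D ⊂ C := Finset.erase_ssubset hwC
  have hDfeas : Feasible 𝒮 D := hL2 _ (Finset.notMem_erase _ _) (hCmin _ hDC)
  -- D is not contained in any split member
  have hinf : ∀ S ∈ 𝒮, u ∈ S → v ∈ S → ¬ (D ⊆ S) := by
    intro S hS hu hv hDS
    rcases not_and_or.mp hnotboth with h | h
    · refine hCinf ⟨insert w (S.erase u),
        mem_splitSystem.mpr (Or.inl ⟨S, hS, ⟨hu, hv⟩, Or.inl rfl⟩), fun x hx => ?_⟩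
      by_cases hxw : x = w
      · exact hxw ▸ Finset.mem_insert_self _ _
      · have hxD : x ∈ D := Finset.mem_erase.mpr ⟨hxw, hx⟩
        exact Finset.mem_insert_of_mem (Finset.mem_erase.mpr
          ⟨fun hxu => h (hxu ▸ hx), hDS hxD⟩)
    · refine hCinf ⟨insert w (S.erase v),
        mem_splitSystem.mpr (Or.inl ⟨S, hS, ⟨hu, hv⟩, Or.inr rfl⟩), fun x hx => ?_⟩
      by_cases hxw : x = w
      · exact hxw ▸ Finset.mem_insert_self _ _
      · have hxD : x ∈ D := Finset.mem_erase.mpr ⟨hxw, hx⟩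
        exact Finset.mem_insert_of_mem (Finset.mem_erase.mpr
          ⟨fun hxv => h (hxv ▸ hx), hDS hxD⟩)
  -- for each x in D, D.erase x sits in a split member
  have hx : ∀ x ∈ D, ∃ S ∈ 𝒮, u ∈ S ∧ v ∈ S ∧ D.erase x ⊆ S := by
    intro x hxD
    have hxw : x ≠ w := (Finset.mem_erase.mp hxD).1
    have hxC : x ∈ C := Finset.mem_of_mem_erase hxD
    obtain ⟨T, hT, hsub⟩ := hCmin _ (Finset.erase_ssubset hxC)
    have hwT : w ∈ T := hsub (Finset.mem_erase.mpr ⟨fun h => hxw h.symm, hwC⟩)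
    rcases mem_splitSystem.mp hT with ⟨S, hS, ⟨hu, hv⟩, hTe⟩ | ⟨hT𝒮, _⟩
    · refine ⟨S, hS, hu, hv, fun y hy => ?_⟩
      obtain ⟨hyx, hyD⟩ := Finset.mem_erase.mp hy
      obtain ⟨hyw, hyC⟩ := Finset.mem_erase.mp hyD
      have hyT : y ∈ T := hsub (Finset.mem_erase.mpr ⟨hyx, hyC⟩)
      rcases hTe with rfl | rfl
      · rcases Finset.mem_insert.mp hyT with h | h
        · exact absurd h hyw
        · exact Finset.mem_of_mem_erase h
      · rcases Finset.mem_insert.mp hyT with h | h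
        · exact absurd h hyw
        · exact Finset.mem_of_mem_erase h
    · exact absurd hwT (hw _ hT𝒮)
  -- main case analysis
  by_cases hAu : Feasible 𝒮 (insert u D)
  · by_cases hAv : Feasible 𝒮 (insert v D)
    · right; right
      constructor
      · rintro ⟨S, hS, hsub⟩
        have hu : u ∈ S := hsub (Finset.mem_insert_self _ _)
        have hv : v ∈ S := hsub (Finset.mem_insert_of_mem (Finset.mem_insert_self _ _))
        exact hinf S hS hu hv (fun x hxD => hsub
          (Finset.mem_insert_of_mem (Finset.mem_insert_of_mem hxD)))
      · intro C' hC'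
        obtain ⟨x, hxA, hxC'⟩ := Finset.exists_of_ssubset hC'
        have hsubx : C' ⊆ (insert u (insert v D)).erase x := fun y hy =>
          Finset.mem_erase.mpr ⟨fun h => hxC' (h ▸ hy), hC'.1 hy⟩
        by_cases hxu : x = u
        · refine feas_mono ?_ hAv
          refine hsubx.trans (fun y hy => ?_)
          obtain ⟨hyx, hyA⟩ := Finset.mem_erase.mp hy
          rcases Finset.mem_insert.mp hyA with h | h
          · exact absurd (h.trans hxu.symm) hyx
          · exact h
        · by_cases hxv : x = v
          · refine feas_mono ?_ hAu
            refine hsubx.trans (fun y hy => ?_)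
            obtain ⟨hyx, hyA⟩ := Finset.mem_erase.mp hy
            rcases Finset.mem_insert.mp hyA with h | h
            · exact Finset.mem_insert.mpr (Or.inl h)
            · rcases Finset.mem_insert.mp h with h' | h'
              · exact absurd (h'.trans hxv.symm) hyx
              · exact Finset.mem_insert_of_mem h'
          · have hxD : x ∈ D := by
              rcases Finset.mem_insert.mp hxA with h | h
              · exact absurd h hxu
              · rcases Finset.mem_insert.mp h with h' | h'
                · exact absurd h' hxv
                · exact h'
            obtain ⟨S, hS, hu, hv, hsubS⟩ := hx x hxD
            refine ⟨S, hS, hsubx.trans (fun y hy => ?_)⟩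
            obtain ⟨hyx, hyA⟩ := Finset.mem_erase.mp hy
            rcases Finset.mem_insert.mp hyA with rfl | h
            · exact hu
            · rcases Finset.mem_insert.mp h with rfl | h'
              · exact hv
              · exact hsubS (Finset.mem_erase.mpr ⟨hyx, h'⟩)
    · right; left
      refine ⟨hAv, ?_⟩
      intro C' hC'
      obtain ⟨x, hxA, hxC'⟩ := Finset.exists_of_ssubset hC'
      have hsubx : C' ⊆ (insert v D).erase x := fun y hy =>
        Finset.mem_erase.mpr ⟨fun h => hxC' (h ▸ hy), hC'.1 hy⟩
      by_cases hxv : x = v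
      · refine feas_mono ?_ hDfeas
        refine hsubx.trans (fun y hy => ?_)
        obtain ⟨hyx, hyA⟩ := Finset.mem_erase.mp hy
        rcases Finset.mem_insert.mp hyA with h | h
        · exact absurd (h.trans hxv.symm) hyx
        · exact h
      · have hxD : x ∈ D := by
          rcases Finset.mem_insert.mp hxA with h | h
          · exact absurd h hxv
          · exact h
        obtain ⟨S, hS, hu, hv, hsubS⟩ := hx x hxD
        refine ⟨S, hS, hsubx.trans (fun y hy => ?_)⟩
        obtain ⟨hyx, hyA⟩ := Finset.mem_erase.mp hy
        rcases Finset.mem_insert.mp hyA with rfl | h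
        · exact hv
        · exact hsubS (Finset.mem_erase.mpr ⟨hyx, h⟩)
  · left
    refine ⟨hAu, ?_⟩
    intro C' hC'
    obtain ⟨x, hxA, hxC'⟩ := Finset.exists_of_ssubset hC'
    have hsubx : C' ⊆ (insert u D).erase x := fun y hy =>
      Finset.mem_erase.mpr ⟨fun h => hxC' (h ▸ hy), hC'.1 hy⟩
    by_cases hxu : x = u
    · refine feas_mono ?_ hDfeas
      refine hsubx.trans (fun y hy => ?_)
      obtain ⟨hyx, hyA⟩ := Finset.mem_erase.mp hy
      rcases Finset.mem_insert.mp hyA with h | h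
      · exact absurd (h.trans hxu.symm) hyx
      · exact h
    · have hxD : x ∈ D := by
        rcases Finset.mem_insert.mp hxA with h | h
        · exact absurd h hxu
        · exact h
      obtain ⟨S, hS, hu, hv, hsubS⟩ := hx x hxD
      refine ⟨S, hS, hsubx.trans (fun y hy => ?_)⟩
      obtain ⟨hyx, hyA⟩ := Finset.mem_erase.mp hy
      rcases Finset.mem_insert.mp hyA with rfl | h
      · exact hu
      · exact hsubS (Finset.mem_erase.mpr ⟨hyx, h⟩)
end

section
/- Let 𝒮' be the set system obtained from 𝒮 by splitting the edge (u,v) by the new vertex w, and suppose C is a minimal infeasible set for 𝒮' with |C| ≥ 3 that is not a minimal infeasible set for 𝒮 (a new minimal conflict set). Then for every w' ∈ C \ {w} there exists a member S ∈ 𝒮 (before the split) with {u, v, w'} ⊆ S; in particular, after the split w' lies in a common member of 𝒮' with u and also in a common member of 𝒮' with v. -/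
variable {α : Type*}

theorem split_new_conflict_common_members {α : Type*} [DecidableEq α]
    (𝒮 : Finset (Finset α)) (u v w : α) (huv : u ≠ v)
    (huvS : ∃ S ∈ 𝒮, u ∈ S ∧ v ∈ S)
    (hw : ∀ S ∈ 𝒮, w ∉ S)
    (C : Finset α) (hcard : 3 ≤ C.card)
    (hC : MinimalInfeasible (splitSystem 𝒮 u v w) C)
    (hnew : ¬ MinimalInfeasible 𝒮 C) :
    ∀ w' ∈ C, w' ≠ w →
      (∃ S ∈ 𝒮, u ∈ S ∧ v ∈ S ∧ w' ∈ S) ∧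
      (∃ S' ∈ splitSystem 𝒮 u v w, u ∈ S' ∧ w' ∈ S') ∧
      (∃ S' ∈ splitSystem 𝒮 u v w, v ∈ S' ∧ w' ∈ S') := by
  obtain ⟨S₀, hS₀, huS₀, hvS₀⟩ := huvS
  have huw : u ≠ w := fun h => hw S₀ hS₀ (h ▸ huS₀)
  have hvw : v ≠ w := fun h => hw S₀ hS₀ (h ▸ hvS₀)
  -- no member of the split system contains both u and v
  have no_both : ∀ T ∈ splitSystem 𝒮 u v w, ¬ (u ∈ T ∧ v ∈ T) := by
    intro T hT
    rw [mem_splitSystem] at hT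
    rcases hT with ⟨S, _, ⟨h1, h2⟩, (rfl | rfl)⟩ | ⟨_, h2⟩
    · rintro ⟨hu, -⟩
      rcases Finset.mem_insert.mp hu with h | h
      · exact huw h
      · exact (Finset.mem_erase.mp h).1 rfl
    · rintro ⟨-, hv⟩
      rcases Finset.mem_insert.mp hv with h | h
      · exact hvw h
      · exact (Finset.mem_erase.mp h).1 rfl
    · exact h2
  -- not both u and v are in C
  have not_both_C : ¬ (u ∈ C ∧ v ∈ C) := by
    rintro ⟨hu, hv⟩
    have hss : ({u, v} : Finset α) ⊂ C := by
      refine Finset.ssubset_iff_subset_ne.mpr ⟨?_, ?_⟩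
      · intro x hx
        rcases Finset.mem_insert.mp hx with rfl | hx
        · exact hu
        · exact Finset.mem_singleton.mp hx ▸ hv
      · intro h
        have : ({u, v} : Finset α).card = C.card := by rw [h]
        have h2 : ({u, v} : Finset α).card ≤ 2 := Finset.card_insert_le _ _ |>.trans (by simp)
        omega
    obtain ⟨T, hT, hsub⟩ := hC.2 _ hss
    exact no_both T hT ⟨hsub (by simp), hsub (by simp)⟩
  -- w ∈ C
  have hwC : w ∈ C := by
    by_contra hwC
    -- every proper subset of C is feasible in 𝒮
    have hfeas : ∀ C' ⊂ C, Feasible 𝒮 C' := by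
      intro C' hC'
      obtain ⟨T, hT, hsub⟩ := hC.2 _ hC'
      have hwC' : w ∉ C' := fun h => hwC (hC'.subset h)
      rw [mem_splitSystem] at hT
      rcases hT with ⟨S, hS, ⟨h1, h2⟩, (rfl | rfl)⟩ | ⟨h1, _⟩
      · refine ⟨S, hS, fun x hx => ?_⟩
        rcases Finset.mem_insert.mp (hsub hx) with rfl | h
        · exact absurd hx hwC'
        · exact Finset.mem_of_mem_erase h
      · refine ⟨S, hS, fun x hx => ?_⟩
        rcases Finset.mem_insert.mp (hsub hx) with rfl | h
        · exact absurd hx hwC'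
        · exact Finset.mem_of_mem_erase h
      · exact ⟨T, h1, hsub⟩
    -- hence C is feasible in 𝒮
    have hCfeas : Feasible 𝒮 C := by
      by_contra h
      exact hnew ⟨h, hfeas⟩
    obtain ⟨S, hS, hsub⟩ := hCfeas
    -- u ∈ C and v ∈ C
    have huC : u ∈ C := by
      by_contra huC
      by_cases hb : u ∈ S ∧ v ∈ S
      · refine hC.1 ⟨insert w (S.erase u),
          mem_splitSystem.mpr (Or.inl ⟨S, hS, hb, Or.inl rfl⟩), fun x hx => ?_⟩
        exact Finset.mem_insert_of_mem (Finset.mem_erase.mpr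
          ⟨fun h => huC (h ▸ hx), hsub hx⟩)
      · exact hC.1 ⟨S, mem_splitSystem.mpr (Or.inr ⟨hS, hb⟩), hsub⟩
    have hvC : v ∈ C := by
      by_contra hvC
      by_cases hb : u ∈ S ∧ v ∈ S
      · refine hC.1 ⟨insert w (S.erase v),
          mem_splitSystem.mpr (Or.inl ⟨S, hS, hb, Or.inr rfl⟩), fun x hx => ?_⟩
        exact Finset.mem_insert_of_mem (Finset.mem_erase.mpr
          ⟨fun h => hvC (h ▸ hx), hsub hx⟩)
      · exact hC.1 ⟨S, mem_splitSystem.mpr (Or.inr ⟨hS, hb⟩), hsub⟩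
    exact not_both_C ⟨huC, hvC⟩
  -- u ∉ C
  have huC : u ∉ C := by
    intro huC
    have hvC : v ∉ C := fun hv => not_both_C ⟨huC, hv⟩
    obtain ⟨T, hT, hsub⟩ := hC.2 _ (Finset.erase_ssubset huC)
    have hwT : w ∈ T := hsub (Finset.mem_erase.mpr ⟨Ne.symm huw, hwC⟩)
    rw [mem_splitSystem] at hT
    rcases hT with ⟨S, hS, ⟨h1, h2⟩, (rfl | rfl)⟩ | ⟨h1, _⟩
    · -- T = insert w (S.erase u); then C ⊆ insert w (S.erase v)
      refine hC.1 ⟨insert w (S.erase v),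
        mem_splitSystem.mpr (Or.inl ⟨S, hS, ⟨h1, h2⟩, Or.inr rfl⟩), fun x hx => ?_⟩
      by_cases hxu : x = u
      · exact hxu ▸ Finset.mem_insert_of_mem (Finset.mem_erase.mpr ⟨huv, h1⟩)
      · have := hsub (Finset.mem_erase.mpr ⟨hxu, hx⟩)
        rcases Finset.mem_insert.mp this with rfl | h
        · exact Finset.mem_insert_self _ _
        · exact Finset.mem_insert_of_mem (Finset.mem_erase.mpr
            ⟨fun he => hvC (he ▸ hx), Finset.mem_of_mem_erase h⟩)
    · -- T = insert w (S.erase v); then C ⊆ T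
      refine hC.1 ⟨insert w (S.erase v),
        mem_splitSystem.mpr (Or.inl ⟨S, hS, ⟨h1, h2⟩, Or.inr rfl⟩), fun x hx => ?_⟩
      by_cases hxu : x = u
      · exact hxu ▸ Finset.mem_insert_of_mem (Finset.mem_erase.mpr ⟨huv, h1⟩)
      · exact hsub (Finset.mem_erase.mpr ⟨hxu, hx⟩)
    · exact hw T h1 hwT
  -- v ∉ C (symmetric)
  have hvC : v ∉ C := by
    intro hvC
    obtain ⟨T, hT, hsub⟩ := hC.2 _ (Finset.erase_ssubset hvC)
    have hwT : w ∈ T := hsub (Finset.mem_erase.mpr ⟨Ne.symm hvw, hwC⟩)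
    rw [mem_splitSystem] at hT
    rcases hT with ⟨S, hS, ⟨h1, h2⟩, (rfl | rfl)⟩ | ⟨h1, _⟩
    · refine hC.1 ⟨insert w (S.erase u),
        mem_splitSystem.mpr (Or.inl ⟨S, hS, ⟨h1, h2⟩, Or.inl rfl⟩), fun x hx => ?_⟩
      by_cases hxv : x = v
      · exact hxv ▸ Finset.mem_insert_of_mem (Finset.mem_erase.mpr ⟨huv.symm, h2⟩)
      · exact hsub (Finset.mem_erase.mpr ⟨hxv, hx⟩)
    · refine hC.1 ⟨insert w (S.erase u),
        mem_splitSystem.mpr (Or.inl ⟨S, hS, ⟨h1, h2⟩, Or.inl rfl⟩), fun x hx => ?_⟩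
      by_cases hxv : x = v
      · exact hxv ▸ Finset.mem_insert_of_mem (Finset.mem_erase.mpr ⟨huv.symm, h2⟩)
      · have := hsub (Finset.mem_erase.mpr ⟨hxv, hx⟩)
        rcases Finset.mem_insert.mp this with rfl | h
        · exact Finset.mem_insert_self _ _
        · exact Finset.mem_insert_of_mem (Finset.mem_erase.mpr
            ⟨fun he => huC (he ▸ hx), Finset.mem_of_mem_erase h⟩)
    · exact hw T h1 hwT
  -- main conclusion
  intro w' hw'C hw'w
  -- {w, w'} is a proper subset of C, hence feasible in the split system
  have hss : ({w, w'} : Finset α) ⊂ C := by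
    refine Finset.ssubset_iff_subset_ne.mpr ⟨?_, ?_⟩
    · intro x hx
      rcases Finset.mem_insert.mp hx with rfl | hx
      · exact hwC
      · exact Finset.mem_singleton.mp hx ▸ hw'C
    · intro h
      have : ({w, w'} : Finset α).card = C.card := by rw [h]
      have h2 : ({w, w'} : Finset α).card ≤ 2 := Finset.card_insert_le _ _ |>.trans (by simp)
      omega
  obtain ⟨T, hT, hsub⟩ := hC.2 _ hss
  have hwT : w ∈ T := hsub (by simp)
  have hw'T : w' ∈ T := hsub (by simp)
  rw [mem_splitSystem] at hT
  have key : ∃ S ∈ 𝒮, u ∈ S ∧ v ∈ S ∧ w' ∈ S := by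
    rcases hT with ⟨S, hS, ⟨h1, h2⟩, (rfl | rfl)⟩ | ⟨h1, _⟩
    · rcases Finset.mem_insert.mp hw'T with h | h
      · exact absurd h hw'w
      · exact ⟨S, hS, h1, h2, Finset.mem_of_mem_erase h⟩
    · rcases Finset.mem_insert.mp hw'T with h | h
      · exact absurd h hw'w
      · exact ⟨S, hS, h1, h2, Finset.mem_of_mem_erase h⟩
    · exact absurd hwT (hw T h1)
  obtain ⟨S, hS, h1, h2, h3⟩ := key
  have hw'u : w' ≠ u := fun h => huC (h ▸ hw'C)
  have hw'v : w' ≠ v := fun h => hvC (h ▸ hw'C)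
  refine ⟨⟨S, hS, h1, h2, h3⟩, ?_, ?_⟩
  · exact ⟨insert w (S.erase v),
      mem_splitSystem.mpr (Or.inl ⟨S, hS, ⟨h1, h2⟩, Or.inr rfl⟩),
      Finset.mem_insert_of_mem (Finset.mem_erase.mpr ⟨huv, h1⟩),
      Finset.mem_insert_of_mem (Finset.mem_erase.mpr ⟨hw'v, h3⟩)⟩
  · exact ⟨insert w (S.erase u),
      mem_splitSystem.mpr (Or.inl ⟨S, hS, ⟨h1, h2⟩, Or.inl rfl⟩),
      Finset.mem_insert_of_mem (Finset.mem_erase.mpr ⟨huv.symm, h2⟩),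
      Finset.mem_insert_of_mem (Finset.mem_erase.mpr ⟨hw'u, h3⟩)⟩
end

section
/- The blocking hypergraph H^b_𝒮 of a set system 𝒮 satisfies: (i) for every minimal infeasible set C for 𝒮 with |C| ≥ 3 there exist two distinct members S_i, S_j ∈ 𝒮 such that {S_i, S_j} is a minimal blocking set, i.e. a hyperedge of H^b_𝒮 of cardinality 2; (ii) the rank of H^b_𝒮 is at most the rank of the conflict hypergraph H^c_𝒮, i.e. every minimal blocking set has cardinality at most the maximum cardinality of a minimal infeasible set. -/
variable {α : Type*}

/-- A subfamily `B ⊆ 𝒮` is blocking if it spans (covers) some minimal infeasible set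
of cardinality at least `3`. -/
def Blocking (𝒮 B : Finset (Finset α)) : Prop :=
  B ⊆ 𝒮 ∧ ∃ C : Finset α, MinimalInfeasible 𝒮 C ∧ 3 ≤ C.card ∧ ∀ x ∈ C, ∃ S ∈ B, x ∈ S

/-- A minimal blocking set: a blocking subfamily, no proper subfamily of which is
blocking.  The minimal blocking sets are the hyperedges of the blocking hypergraph
`H^b_𝒮` (whose vertex set is `𝒮`). -/
def MinimalBlocking (𝒮 B : Finset (Finset α)) : Prop :=
  Blocking 𝒮 B ∧ ∀ B' ⊂ B, ¬ Blocking 𝒮 B'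

/-!
STATEMENT 12: The blocking hypergraph `H^b_𝒮` of a set system `𝒮` satisfies:
(i) for every minimal infeasible set `C` for `𝒮` with `|C| ≥ 3` there exist two
distinct members `S₁, S₂ ∈ 𝒮` such that `{S₁, S₂}` is a minimal blocking set (a
hyperedge of `H^b_𝒮` of cardinality 2); (ii) the rank of `H^b_𝒮` is at most the
rank of the conflict hypergraph `H^c_𝒮`: if `r` bounds the cardinality of every
minimal infeasible set, then `r` bounds the cardinality of every minimal blocking
set.
-/

theorem blocking_hypergraph_properties {α : Type*} [DecidableEq α]
    (𝒮 : Finset (Finset α)) (r : ℕ)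
    (hr : ∀ C : Finset α, MinimalInfeasible 𝒮 C → C.card ≤ r) :
    (∀ C : Finset α, MinimalInfeasible 𝒮 C → 3 ≤ C.card →
        ∃ S₁ ∈ 𝒮, ∃ S₂ ∈ 𝒮, S₁ ≠ S₂ ∧ MinimalBlocking 𝒮 {S₁, S₂}) ∧
      (∀ B : Finset (Finset α), MinimalBlocking 𝒮 B → B.card ≤ r) := by
  classical
  -- small subfamilies are never blocking
  have hsmall : ∀ B' : Finset (Finset α), B'.card ≤ 1 → ¬ Blocking 𝒮 B' := by
    rintro B' hcard ⟨hB'S, C', hC'min, hC'3, hcov⟩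
    interval_cases h : B'.card
    · obtain ⟨x, hx⟩ := Finset.card_pos.mp (by omega : 0 < C'.card)
      obtain ⟨S, hS, -⟩ := hcov x hx
      simp [Finset.card_eq_zero.mp h] at hS
    · obtain ⟨S, rfl⟩ := Finset.card_eq_one.mp h
      exact hC'min.1 ⟨S, hB'S (Finset.mem_singleton_self S), fun x hx => by
        obtain ⟨T, hT, hxT⟩ := hcov x hx
        rwa [Finset.mem_singleton.mp hT] at hxT⟩
  constructor
  · intro C hC hC3
    obtain ⟨x, hx⟩ := Finset.card_pos.mp (by omega : 0 < C.card)
    obtain ⟨y, hy, hyx⟩ : ∃ y ∈ C, y ≠ x := by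
      by_contra h
      push_neg at h
      have : C ⊆ {x} := fun z hz => Finset.mem_singleton.mpr (h z hz)
      have := Finset.card_le_card this
      simp at this; omega
    obtain ⟨S₁, hS₁, hCS₁⟩ := hC.2 (C.erase x) (Finset.erase_ssubset hx)
    obtain ⟨S₂, hS₂, hCS₂⟩ := hC.2 (C.erase y) (Finset.erase_ssubset hy)
    have hne : S₁ ≠ S₂ := by
      rintro rfl
      refine hC.1 ⟨S₁, hS₁, fun z hz => ?_⟩
      by_cases hzx : z = x
      · exact hCS₂ (Finset.mem_erase.mpr ⟨hzx ▸ hyx.symm, hz⟩)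
      · exact hCS₁ (Finset.mem_erase.mpr ⟨hzx, hz⟩)
    refine ⟨S₁, hS₁, S₂, hS₂, hne, ⟨⟨?_, C, hC, hC3, ?_⟩, ?_⟩⟩
    · intro S hS
      rcases Finset.mem_insert.mp hS with rfl | hS
      · exact hS₁
      · exact Finset.mem_singleton.mp hS ▸ hS₂
    · intro z hz
      by_cases hzx : z = x
      · exact ⟨S₂, by simp, hCS₂ (Finset.mem_erase.mpr ⟨hzx ▸ hyx.symm, hz⟩)⟩
      · exact ⟨S₁, by simp, hCS₁ (Finset.mem_erase.mpr ⟨hzx, hz⟩)⟩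
    · intro B' hB'
      refine hsmall B' ?_
      have := Finset.card_lt_card hB'
      have h2 : ({S₁, S₂} : Finset (Finset α)).card ≤ 2 := Finset.card_insert_le _ _ |>.trans (by simp)
      omega
  · intro B ⟨⟨hBS, C, hC, hC3, hcov⟩, hmin⟩
    set f : α → Finset α := fun x => if h : ∃ S ∈ B, x ∈ S then h.choose else ∅ with hf
    have hfmem : ∀ x ∈ C, f x ∈ B ∧ x ∈ f x := by
      intro x hx
      have h : ∃ S ∈ B, x ∈ S := hcov x hx
      simp only [hf, dif_pos h]
      exact ⟨h.choose_spec.1, h.choose_spec.2⟩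
    have hsub : C.image f ⊆ B := by
      intro S hS
      obtain ⟨x, hx, rfl⟩ := Finset.mem_image.mp hS
      exact (hfmem x hx).1
    have heq : C.image f = B := by
      by_contra hne
      exact hmin (C.image f) (lt_of_le_of_ne hsub hne)
        ⟨hsub.trans hBS, C, hC, hC3, fun x hx =>
          ⟨f x, Finset.mem_image_of_mem f hx, (hfmem x hx).2⟩⟩
    calc B.card = (C.image f).card := by rw [heq]
      _ ≤ C.card := Finset.card_image_le
      _ ≤ r := hr C hC
end

section
/- Let γ : 𝒮 → {1,…,q} be a coloring of the blocking hypergraph H^b_𝒮 (no hyperedge of H^b_𝒮 is monochromatic), and for v ∈ V let π_v = {γ(S) : S ∈ 𝒮, v ∈ S}. Suppose λ : V → ℝ_{≥0} with Σ_{v∈V} λ_v = 1 and z ∈ {0,1}^q satisfy λ_v ≤ Σ_{c ∈ π_v} z_c for all v ∈ V and Σ_{c=1}^q z_c = 1. Then the support supp(λ) = {v : λ_v > 0} does not contain any minimal infeasible set for 𝒮 of cardinality at least 3. -/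
variable {α : Type*}

/-!
STATEMENT 13: Let `γ : 𝒮 → {1,…,q}` be a coloring of the blocking hypergraph
`H^b_𝒮` (no minimal blocking set is monochromatic), and for `x ∈ V` let
`π_x = {γ S : S ∈ 𝒮, x ∈ S}`.  Suppose `λ : V → ℝ≥0` with `Σ_{x∈V} λ x = 1` and
`z ∈ {0,1}^q` satisfy `λ x ≤ Σ_{c ∈ π_x} z c` for all `x ∈ V` and `Σ_c z c = 1`.
Then the support `{x : λ x > 0}` does not contain any minimal infeasible set for `𝒮`
of cardinality at least 3.
-/

theorem coloring_resolves_higher_rank_conflicts {α : Type*} [DecidableEq α]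
    (𝒮 : Finset (Finset α)) (V : Finset α)
    (hV : ∀ x, x ∈ V ↔ ∃ S ∈ 𝒮, x ∈ S)
    (q : ℕ) (γ : Finset α → Fin q)
    (hγ : ∀ B : Finset (Finset α), MinimalBlocking 𝒮 B →
        ∃ S₁ ∈ B, ∃ S₂ ∈ B, γ S₁ ≠ γ S₂)
    (lam : α → ℝ) (hlam0 : ∀ x, 0 ≤ lam x)
    (hlamV : ∀ x, x ∉ V → lam x = 0)
    (hlam1 : ∑ x ∈ V, lam x = 1)
    (z : Fin q → ℝ) (hz01 : ∀ c, z c = 0 ∨ z c = 1)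
    (hz1 : ∑ c, z c = 1)
    (hlz : ∀ x ∈ V, lam x ≤ ∑ c ∈ (𝒮.filter fun S => x ∈ S).image γ, z c) :
    ∀ C : Finset α, MinimalInfeasible 𝒮 C → 3 ≤ C.card →
      ¬ ∀ x ∈ C, 0 < lam x := by
  classical
  intro C hC hC3 hpos
  -- there is a unique color c₀ with z c₀ = 1
  obtain ⟨c₀, hc₀⟩ : ∃ c, z c = 1 := by
    by_contra h
    push_neg at h
    have : ∀ c, z c = 0 := fun c => (hz01 c).resolve_right (h c)
    simp [this] at hz1
  have huniq : ∀ c, z c = 1 → c = c₀ := by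
    intro c hc
    by_contra hne
    have hsub : ({c, c₀} : Finset (Fin q)) ⊆ Finset.univ := Finset.subset_univ _
    have h2 : (2 : ℝ) ≤ ∑ c', z c' := by
      have hnn : ∀ i ∈ (Finset.univ : Finset (Fin q)), i ∉ ({c, c₀} : Finset (Fin q)) → 0 ≤ z i := by
        intro i _ _
        rcases hz01 i with h | h <;> rw [h] <;> norm_num
      have := Finset.sum_le_sum_of_subset_of_nonneg hsub hnn
      rw [Finset.sum_pair hne, hc, hc₀] at this
      linarith
    linarith [hz1]
  -- each x ∈ C lies in some S ∈ 𝒮 with γ S = c₀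
  have hpick : ∀ x ∈ C, ∃ S, S ∈ 𝒮 ∧ x ∈ S ∧ γ S = c₀ := by
    intro x hx
    have hxV : x ∈ V := by
      by_contra h
      have := hlamV x h
      linarith [hpos x hx]
    have hle := hlz x hxV
    have hposx := hpos x hx
    have : 0 < ∑ c ∈ (𝒮.filter fun S => x ∈ S).image γ, z c := lt_of_lt_of_le hposx hle
    obtain ⟨c, hcmem, hcne⟩ := Finset.exists_ne_zero_of_sum_ne_zero (ne_of_gt this)
    have hc1 : z c = 1 := (hz01 c).resolve_left hcne
    have hcc₀ : c = c₀ := huniq c hc1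
    obtain ⟨S, hSmem, hSγ⟩ := Finset.mem_image.mp hcmem
    obtain ⟨hS𝒮, hxS⟩ := Finset.mem_filter.mp hSmem
    exact ⟨S, hS𝒮, hxS, by rw [hSγ, hcc₀]⟩
  choose f hf𝒮 hfx hfγ using hpick
  set g : α → Finset α := fun x => if h : x ∈ C then f x h else ∅ with hg
  have hg𝒮 : ∀ x ∈ C, g x ∈ 𝒮 := fun x hx => by simp [hg, hx, hf𝒮]
  have hgx : ∀ x ∈ C, x ∈ g x := fun x hx => by simp [hg, hx, hfx]
  have hgγ : ∀ x ∈ C, γ (g x) = c₀ := fun x hx => by simp [hg, hx, hfγ]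
  set B : Finset (Finset α) := C.image g with hB
  have hB𝒮 : B ⊆ 𝒮 := by
    intro S hS
    obtain ⟨x, hx, rfl⟩ := Finset.mem_image.mp hS
    exact hg𝒮 x hx
  have hBblock : Blocking 𝒮 B :=
    ⟨hB𝒮, C, hC, hC3, fun x hx => ⟨g x, Finset.mem_image_of_mem g hx, hgx x hx⟩⟩
  -- pick a minimal blocking subset of B
  set P : Finset (Finset (Finset α)) := B.powerset.filter (fun B' => Blocking 𝒮 B') with hP
  have hBP : B ∈ P := by simp [hP, hBblock]
  obtain ⟨B', hB'P, hB'min⟩ : ∃ B' ∈ P, ∀ x ∈ P, ¬ x < B' := by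
    obtain ⟨m, hm⟩ := Finset.exists_minimal (s := P) ⟨B, hBP⟩
    exact ⟨m, hm.prop, fun x hx => hm.not_lt hx⟩
  have hB'B : B' ⊆ B := Finset.mem_powerset.mp (Finset.mem_filter.mp hB'P).1
  have hB'block : Blocking 𝒮 B' := (Finset.mem_filter.mp hB'P).2
  have hB'minblock : MinimalBlocking 𝒮 B' := by
    refine ⟨hB'block, fun B'' hB'' hblock => ?_⟩
    exact hB'min B'' (by
      simp only [hP, Finset.mem_filter, Finset.mem_powerset]
      exact ⟨hB''.subset.trans hB'B, hblock⟩) hB''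
  obtain ⟨S₁, hS₁, S₂, hS₂, hne⟩ := hγ B' hB'minblock
  obtain ⟨x₁, hx₁, rfl⟩ := Finset.mem_image.mp (hB'B hS₁)
  obtain ⟨x₂, hx₂, rfl⟩ := Finset.mem_image.mp (hB'B hS₂)
  exact hne (by rw [hgγ x₁ hx₁, hgγ x₂ hx₂])
end

section
/- Let G^c_𝒮 be the conflict graph of 𝒮, whose edges are the two-element infeasible sets, and let (A_ℓ ∪ B_ℓ, E_ℓ)_{ℓ=1}^K be a biclique cover of G^c_𝒮. Suppose λ : V → ℝ_{≥0} with Σ_{v∈V} λ_v = 1 and y ∈ {0,1}^K satisfy Σ_{v ∈ A_ℓ} λ_v ≤ y_ℓ and Σ_{v ∈ B_ℓ} λ_v ≤ 1 − y_ℓ for all ℓ ∈ {1,…,K}. Then the support supp(λ) = {v : λ_v > 0} does not contain any minimal infeasible set for 𝒮 of cardinality 2. -/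
variable {α : Type*}

/-!
STATEMENT 14: Let `G^c_𝒮` be the conflict graph of `𝒮` (vertex set `V = ⋃ 𝒮`,
edges the two-element infeasible sets), and let `(A ℓ ∪ B ℓ, E ℓ)` for
`ℓ ∈ {1,…,K}` be a biclique cover of `G^c_𝒮`.  Suppose `λ : V → ℝ≥0` with
`Σ_{x∈V} λ x = 1` and `y ∈ {0,1}^K` satisfy `Σ_{x ∈ A ℓ} λ x ≤ y ℓ` and
`Σ_{x ∈ B ℓ} λ x ≤ 1 − y ℓ` for all `ℓ`.  Then the support `{x : λ x > 0}` does not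
contain any minimal infeasible set for `𝒮` of cardinality 2.
-/

theorem biclique_cover_resolves_pairwise_conflicts {α : Type*} [DecidableEq α]
    (𝒮 : Finset (Finset α)) (V : Finset α)
    (hV : ∀ x, x ∈ V ↔ ∃ S ∈ 𝒮, x ∈ S)
    (K : ℕ) (A B : Fin K → Finset α)
    (hAne : ∀ ℓ, (A ℓ).Nonempty) (hBne : ∀ ℓ, (B ℓ).Nonempty)
    (hdisj : ∀ ℓ, Disjoint (A ℓ) (B ℓ))
    (hAV : ∀ ℓ, A ℓ ⊆ V) (hBV : ∀ ℓ, B ℓ ⊆ V)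
    (hedge : ∀ ℓ, ∀ u ∈ A ℓ, ∀ v ∈ B ℓ, ¬ Feasible 𝒮 {u, v})
    (hcover : ∀ u ∈ V, ∀ v ∈ V, u ≠ v → ¬ Feasible 𝒮 {u, v} →
        ∃ ℓ, (u ∈ A ℓ ∧ v ∈ B ℓ) ∨ (v ∈ A ℓ ∧ u ∈ B ℓ))
    (lam : α → ℝ) (hlam0 : ∀ x, 0 ≤ lam x)
    (hlamV : ∀ x, x ∉ V → lam x = 0)
    (hlam1 : ∑ x ∈ V, lam x = 1)
    (y : Fin K → ℝ) (hy01 : ∀ ℓ, y ℓ = 0 ∨ y ℓ = 1)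
    (hyA : ∀ ℓ, ∑ x ∈ A ℓ, lam x ≤ y ℓ)
    (hyB : ∀ ℓ, ∑ x ∈ B ℓ, lam x ≤ 1 - y ℓ) :
    ∀ C : Finset α, MinimalInfeasible 𝒮 C → C.card = 2 →
      ¬ ∀ x ∈ C, 0 < lam x := by
  intro C hC hcard hpos
  obtain ⟨u, v, huv, rfl⟩ := Finset.card_eq_two.mp hcard
  have hu : 0 < lam u := hpos u (by simp)
  have hv : 0 < lam v := hpos v (by simp)
  have huV : u ∈ V := by
    by_contra h; exact absurd (hlamV u h) (ne_of_gt hu)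
  have hvV : v ∈ V := by
    by_contra h; exact absurd (hlamV v h) (ne_of_gt hv)
  have hinf : ¬ Feasible 𝒮 {u, v} := hC.1
  obtain ⟨ℓ, hcase⟩ := hcover u huV v hvV huv hinf
  have key : ∀ a b : α, a ∈ A ℓ → b ∈ B ℓ → 0 < lam a → 0 < lam b → False := by
    intro a b ha hb hla hlb
    have h1 : lam a ≤ y ℓ :=
      le_trans (Finset.single_le_sum (fun x _ => hlam0 x) ha) (hyA ℓ)
    have h2 : lam b ≤ 1 - y ℓ :=
      le_trans (Finset.single_le_sum (fun x _ => hlam0 x) hb) (hyB ℓ)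
    rcases hy01 ℓ with h | h <;> rw [h] at h1 h2 <;> linarith
  rcases hcase with ⟨ha, hb⟩ | ⟨ha, hb⟩
  · exact key u v ha hb hu hv
  · exact key v u ha hb hv hu
end

section
/- Let (A_ℓ ∪ B_ℓ, E_ℓ)_{ℓ=1}^K be a biclique cover of the conflict graph G^c_𝒮 and γ : 𝒮 → {1,…,q} a coloring of the blocking hypergraph H^b_𝒮, and for v ∈ V let π_v = {γ(S) : S ∈ 𝒮, v ∈ S}. Then for λ : V → ℝ_{≥0} with Σ_{v∈V} λ_v = 1, the following are equivalent: (a) there exist y ∈ {0,1}^K and z ∈ {0,1}^q with Σ_{v ∈ A_ℓ} λ_v ≤ y_ℓ and Σ_{v ∈ B_ℓ} λ_v ≤ 1 − y_ℓ for all ℓ, λ_v ≤ Σ_{c ∈ π_v} z_c for all v ∈ V, and Σ_{c=1}^q z_c = 1; (b) supp(λ) ⊆ S for some S ∈ 𝒮, i.e. λ belongs to ⋃_{S ∈ 𝒮} Q(S), where Q(S) = {λ ∈ Δ^V : λ_v = 0 for all v ∉ S}. -/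
variable {α : Type*}

/-!
STATEMENT 15: Let `(A ℓ ∪ B ℓ, E ℓ)` for `ℓ ∈ {1,…,K}` be a biclique cover of the
conflict graph `G^c_𝒮` and `γ : 𝒮 → {1,…,q}` a coloring of the blocking hypergraph
`H^b_𝒮`, and for `x ∈ V` let `π_x = {γ S : S ∈ 𝒮, x ∈ S}`.  Then for
`λ : V → ℝ≥0` with `Σ_{x∈V} λ x = 1`, the following are equivalent:
(a) there exist `y ∈ {0,1}^K` and `z ∈ {0,1}^q` with `Σ_{x ∈ A ℓ} λ x ≤ y ℓ` and
`Σ_{x ∈ B ℓ} λ x ≤ 1 − y ℓ` for all `ℓ`, `λ x ≤ Σ_{c ∈ π_x} z c` for all `x ∈ V`,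
and `Σ_c z c = 1`;
(b) `supp λ ⊆ S` for some `S ∈ 𝒮`, i.e. `λ` belongs to `⋃_{S ∈ 𝒮} Q(S)`.
-/

theorem gib_formulation_correct {α : Type*} [DecidableEq α]
    (𝒮 : Finset (Finset α)) (V : Finset α)
    (hV : ∀ x, x ∈ V ↔ ∃ S ∈ 𝒮, x ∈ S)
    (K : ℕ) (A B : Fin K → Finset α)
    (hAne : ∀ ℓ, (A ℓ).Nonempty) (hBne : ∀ ℓ, (B ℓ).Nonempty)
    (hdisj : ∀ ℓ, Disjoint (A ℓ) (B ℓ))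
    (hAV : ∀ ℓ, A ℓ ⊆ V) (hBV : ∀ ℓ, B ℓ ⊆ V)
    (hedge : ∀ ℓ, ∀ u ∈ A ℓ, ∀ v ∈ B ℓ, ¬ Feasible 𝒮 {u, v})
    (hcover : ∀ u ∈ V, ∀ v ∈ V, u ≠ v → ¬ Feasible 𝒮 {u, v} →
        ∃ ℓ, (u ∈ A ℓ ∧ v ∈ B ℓ) ∨ (v ∈ A ℓ ∧ u ∈ B ℓ))
    (q : ℕ) (γ : Finset α → Fin q)
    (hγ : ∀ B' : Finset (Finset α), MinimalBlocking 𝒮 B' →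
        ∃ S₁ ∈ B', ∃ S₂ ∈ B', γ S₁ ≠ γ S₂)
    (lam : α → ℝ) (hlam0 : ∀ x, 0 ≤ lam x)
    (hlamV : ∀ x, x ∉ V → lam x = 0)
    (hlam1 : ∑ x ∈ V, lam x = 1) :
    (∃ (y : Fin K → ℝ) (z : Fin q → ℝ),
        (∀ ℓ, y ℓ = 0 ∨ y ℓ = 1) ∧ (∀ c, z c = 0 ∨ z c = 1) ∧
        (∀ ℓ, ∑ x ∈ A ℓ, lam x ≤ y ℓ) ∧
        (∀ ℓ, ∑ x ∈ B ℓ, lam x ≤ 1 - y ℓ) ∧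
        (∀ x ∈ V, lam x ≤ ∑ c ∈ (𝒮.filter fun S => x ∈ S).image γ, z c) ∧
        ∑ c, z c = 1) ↔
      ∃ S ∈ 𝒮, ∀ x, 0 < lam x → x ∈ S := by
  classical
  have hVx : ∀ x, 0 < lam x → x ∈ V := by
    intro x hx
    by_contra h
    rw [hlamV x h] at hx; exact lt_irrefl 0 hx
  have hpos_mem : ∀ (F : Finset α), 0 < ∑ x ∈ F, lam x → ∃ u ∈ F, 0 < lam u := by
    intro F hF
    by_contra h
    push_neg at h
    have : ∑ x ∈ F, lam x = 0 :=
      Finset.sum_eq_zero (fun x hx => le_antisymm (h x hx) (hlam0 x))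
    linarith
  constructor
  · rintro ⟨y, z, hy01, hz01, hyA, hyB, hzpi, hz1⟩
    set T : Finset α := V.filter (fun x => 0 < lam x) with hTdef
    have hTV : T ⊆ V := Finset.filter_subset _ _
    have hTmem : ∀ x, x ∈ T ↔ 0 < lam x := by
      intro x
      constructor
      · intro hx; exact (Finset.mem_filter.mp hx).2
      · intro hx; exact Finset.mem_filter.mpr ⟨hVx x hx, hx⟩
    have hz0 : ∀ c, 0 ≤ z c := fun c => by rcases hz01 c with h | h <;> simp [h]
    have hTne : T.Nonempty := by
      by_contra h
      rw [Finset.not_nonempty_iff_eq_empty] at h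
      have h0 : ∀ x ∈ V, lam x = 0 := by
        intro x hx
        by_contra h0
        have h1 : 0 < lam x := lt_of_le_of_ne (hlam0 x) (Ne.symm h0)
        have h2 : x ∈ T := (hTmem x).mpr h1
        simp [h] at h2
      rw [Finset.sum_eq_zero h0] at hlam1
      norm_num at hlam1
    obtain ⟨x₀, hx₀⟩ := hTne
    obtain ⟨S₀, hS₀, -⟩ := (hV x₀).mp (hTV hx₀)
    have hcex : ∃ c, z c = 1 := by
      by_contra h
      push_neg at h
      have h0 : ∀ c, z c = 0 := fun c => (hz01 c).resolve_right (h c)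
      rw [Finset.sum_eq_zero (fun c _ => h0 c)] at hz1
      norm_num at hz1
    obtain ⟨cstar, hcstar⟩ := hcex
    have hzother : ∀ c, c ≠ cstar → z c = 0 := by
      intro c hc
      have herase : z cstar + ∑ c' ∈ Finset.univ.erase cstar, z c' = 1 := by
        rw [Finset.add_sum_erase _ z (Finset.mem_univ cstar)]
        exact hz1
      have h2 : ∑ c' ∈ Finset.univ.erase cstar, z c' = 0 := by linarith
      have h3 := (Finset.sum_eq_zero_iff_of_nonneg (fun c' _ => hz0 c')).mp h2
      exact h3 c (Finset.mem_erase.mpr ⟨hc, Finset.mem_univ c⟩)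
    have hcov : ∀ x ∈ T, ∃ S ∈ 𝒮, x ∈ S ∧ γ S = cstar := by
      intro x hx
      by_contra h
      push_neg at h
      have hxl : 0 < lam x := (hTmem x).mp hx
      have hle := hzpi x (hTV hx)
      have hzero : ∑ c ∈ (𝒮.filter fun S => x ∈ S).image γ, z c = 0 := by
        apply Finset.sum_eq_zero
        intro c hc
        obtain ⟨S, hS, hγS⟩ := Finset.mem_image.mp hc
        obtain ⟨hS𝒮, hxS⟩ := Finset.mem_filter.mp hS
        apply hzother
        rw [← hγS]
        exact h S hS𝒮 hxS
      rw [hzero] at hle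
      linarith
    by_contra hgoal
    have hTinf : ¬ Feasible 𝒮 T := by
      rintro ⟨S, hS, hsub⟩
      exact hgoal ⟨S, hS, fun x hx => hsub ((hTmem x).mpr hx)⟩
    obtain ⟨C, hCmem, hCmin⟩ := Finset.exists_min_image
      (T.powerset.filter (fun C => ¬ Feasible 𝒮 C)) Finset.card
      ⟨T, Finset.mem_filter.mpr ⟨Finset.mem_powerset.mpr (Finset.Subset.refl T), hTinf⟩⟩
    obtain ⟨hCT, hCinf⟩ := Finset.mem_filter.mp hCmem
    rw [Finset.mem_powerset] at hCT
    have hCminimal : MinimalInfeasible 𝒮 C := by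
      refine ⟨hCinf, fun C' hC' => ?_⟩
      by_contra hC'inf
      have hle : C.card ≤ C'.card := hCmin C' (Finset.mem_filter.mpr
        ⟨Finset.mem_powerset.mpr (hC'.subset.trans hCT), hC'inf⟩)
      exact absurd (Finset.card_lt_card hC') (not_lt.mpr hle)
    have hC2 : 2 ≤ C.card := by
      by_contra h
      push_neg at h
      have hcase : C.card = 0 ∨ C.card = 1 := by omega
      rcases hcase with hc | hc
      · have hCe : C = ∅ := Finset.card_eq_zero.mp hc
        exact hCinf ⟨S₀, hS₀, hCe ▸ Finset.empty_subset S₀⟩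
      · obtain ⟨a, ha⟩ := Finset.card_eq_one.mp hc
        have haT : a ∈ T := hCT (ha ▸ Finset.mem_singleton_self a)
        obtain ⟨S, hS, haS⟩ := (hV a).mp (hTV haT)
        exact hCinf ⟨S, hS, ha ▸ Finset.singleton_subset_iff.mpr haS⟩
    rcases eq_or_lt_of_le hC2 with h2 | h3
    · obtain ⟨u, v, huv, hC⟩ := Finset.card_eq_two.mp h2.symm
      have huT : u ∈ T := hCT (by rw [hC]; simp)
      have hvT : v ∈ T := hCT (by rw [hC]; simp)
      have hinf2 : ¬ Feasible 𝒮 {u, v} := hC ▸ hCinf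
      obtain ⟨ℓ, hcase⟩ := hcover u (hTV huT) v (hTV hvT) huv hinf2
      have key : ∀ a b, a ∈ A ℓ → b ∈ B ℓ → a ∈ T → b ∈ T → False := by
        intro a b ha hb haT hbT
        have h1 : lam a ≤ ∑ x ∈ A ℓ, lam x :=
          Finset.single_le_sum (fun i _ => hlam0 i) ha
        have h2' : lam b ≤ ∑ x ∈ B ℓ, lam x :=
          Finset.single_le_sum (fun i _ => hlam0 i) hb
        have ha0 := (hTmem a).mp haT
        have hb0 := (hTmem b).mp hbT
        rcases hy01 ℓ with hy | hy
        · have := hyA ℓ; rw [hy] at this; linarith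
        · have := hyB ℓ; rw [hy] at this; linarith
      rcases hcase with ⟨hu, hv⟩ | ⟨hv, hu⟩
      · exact key u v hu hv huT hvT
      · exact key v u hv hu hvT huT
    · have hC3 : 3 ≤ C.card := h3
      set Bstar := 𝒮.filter (fun S => γ S = cstar) with hBstardef
      have hBstarcov : ∀ x ∈ C, ∃ S ∈ Bstar, x ∈ S := by
        intro x hx
        obtain ⟨S, hS, hxS, hγS⟩ := hcov x (hCT hx)
        exact ⟨S, Finset.mem_filter.mpr ⟨hS, hγS⟩, hxS⟩
      have hBstarblock : Blocking 𝒮 Bstar :=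
        ⟨Finset.filter_subset _ _, C, hCminimal, hC3, hBstarcov⟩
      obtain ⟨B', hB'mem, hB'min⟩ := Finset.exists_min_image
        (Bstar.powerset.filter (Blocking 𝒮)) Finset.card
        ⟨Bstar, Finset.mem_filter.mpr
          ⟨Finset.mem_powerset.mpr (Finset.Subset.refl _), hBstarblock⟩⟩
      obtain ⟨hB'sub, hB'block⟩ := Finset.mem_filter.mp hB'mem
      rw [Finset.mem_powerset] at hB'sub
      have hB'minb : MinimalBlocking 𝒮 B' := by
        refine ⟨hB'block, fun B'' hB'' hB''block => ?_⟩
        have hle : B'.card ≤ B''.card := hB'min B'' (Finset.mem_filter.mpr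
          ⟨Finset.mem_powerset.mpr (hB''.subset.trans hB'sub), hB''block⟩)
        exact absurd (Finset.card_lt_card hB'') (not_lt.mpr hle)
      obtain ⟨S₁, hS₁, S₂, hS₂, hne⟩ := hγ B' hB'minb
      have hc1 := (Finset.mem_filter.mp (hB'sub hS₁)).2
      have hc2 := (Finset.mem_filter.mp (hB'sub hS₂)).2
      exact hne (hc1.trans hc2.symm)
  · rintro ⟨S, hS, hsupp⟩
    refine ⟨fun ℓ => if 0 < ∑ x ∈ A ℓ, lam x then 1 else 0,
            fun c => if c = γ S then 1 else 0, ?_, ?_, ?_, ?_, ?_, ?_⟩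
    · intro ℓ; by_cases h : 0 < ∑ x ∈ A ℓ, lam x <;> simp [h]
    · intro c; by_cases h : c = γ S <;> simp [h]
    · intro ℓ
      by_cases h : 0 < ∑ x ∈ A ℓ, lam x <;> simp only [h, if_true, if_false]
      · calc ∑ x ∈ A ℓ, lam x ≤ ∑ x ∈ V, lam x :=
              Finset.sum_le_sum_of_subset_of_nonneg (hAV ℓ) (fun i _ _ => hlam0 i)
          _ = 1 := hlam1
      · push_neg at h
        exact h
    · intro ℓ
      by_cases h : 0 < ∑ x ∈ A ℓ, lam x <;> simp only [h, if_true, if_false]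
      · obtain ⟨u, hu, hu0⟩ := hpos_mem (A ℓ) h
        have hBz : ∑ x ∈ B ℓ, lam x = 0 := by
          by_contra hB
          have hBpos : 0 < ∑ x ∈ B ℓ, lam x :=
            lt_of_le_of_ne (Finset.sum_nonneg (fun i _ => hlam0 i)) (Ne.symm hB)
          obtain ⟨v, hv, hv0⟩ := hpos_mem (B ℓ) hBpos
          have huS := hsupp u hu0
          have hvS := hsupp v hv0
          exact hedge ℓ u hu v hv ⟨S, hS, by
            intro w hw
            rcases Finset.mem_insert.mp hw with h | h
            · exact h ▸ huS
            · exact (Finset.mem_singleton.mp h) ▸ hvS⟩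
        rw [hBz]; norm_num
      · have hle : ∑ x ∈ B ℓ, lam x ≤ 1 := by
          calc ∑ x ∈ B ℓ, lam x ≤ ∑ x ∈ V, lam x :=
              Finset.sum_le_sum_of_subset_of_nonneg (hBV ℓ) (fun i _ _ => hlam0 i)
            _ = 1 := hlam1
        linarith
    · intro x hx
      by_cases h : 0 < lam x
      · have hxS : x ∈ S := hsupp x h
        have hmem : γ S ∈ (𝒮.filter fun S' => x ∈ S').image γ :=
          Finset.mem_image_of_mem γ (Finset.mem_filter.mpr ⟨hS, hxS⟩)
        have h1 : (1 : ℝ) ≤ ∑ c ∈ (𝒮.filter fun S' => x ∈ S').image γ,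
            (if c = γ S then (1:ℝ) else 0) := by
          have := Finset.single_le_sum
            (f := fun c => if c = γ S then (1:ℝ) else 0)
            (fun c _ => by by_cases hc : c = γ S <;> simp [hc]) hmem
          simpa using this
        have h2 : lam x ≤ 1 := by
          calc lam x ≤ ∑ v ∈ V, lam v := Finset.single_le_sum (fun i _ => hlam0 i) hx
            _ = 1 := hlam1
        linarith
      · push_neg at h
        have hx0 : lam x = 0 := le_antisymm h (hlam0 x)
        rw [hx0]
        exact Finset.sum_nonneg (fun c _ => by by_cases hc : c = γ S <;> simp [hc])
    · simp
end
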